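/- arXiv:1312.6952 — 16 statements merged into one kernel-verified Lean document; each statement's English description precedes it below -/
import Mathlib

section
/- Let A be a unital associative algebra over ℂ, let X be a ℂ-vector space, and let φ : A × A → X be a ℂ-bilinear map such that φ(a,b) = 0 whenever a, b ∈ A satisfy ab = 0. Then φ(a,x) = φ(ax, 1) and φ(x,a) = φ(1, xa) for every a ∈ A and every x ∈ Im(A). -/
/-- Theorem 3.1 (first part): if a bilinear map `φ` vanishes on pairs with zero product,
then `φ(a,x) = φ(ax,1)` and `φ(x,a) = φ(1,xa)` for all `a ∈ A` and `x` in the linear span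
of the idempotents of `A`. -/
theorem bilinear_zero_product_span_idempotents
    {A X : Type*} [Ring A] [Algebra ℂ A] [AddCommGroup X] [Module ℂ X]
    (φ : A →ₗ[ℂ] A →ₗ[ℂ] X)
    (h : ∀ a b : A, a * b = 0 → φ a b = 0) :
    ∀ a : A, ∀ x ∈ Submodule.span ℂ {p : A | p * p = p},
      φ a x = φ (a * x) 1 ∧ φ x a = φ 1 (x * a) := by
  intro a x hx
  induction hx using Submodule.span_induction with
  | mem p hp =>
    have hp : p * p = p := hp
    constructor
    · have h1 : φ (a * p) (1 - p) = 0 := by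
        apply h; rw [mul_sub, mul_one, mul_assoc, hp, sub_self]
      have h2 : φ (a - a * p) p = 0 := by
        apply h; rw [sub_mul, mul_assoc, hp, sub_self]
      rw [map_sub, sub_eq_zero] at h1
      rw [map_sub, LinearMap.sub_apply, sub_eq_zero] at h2
      exact h2.trans h1.symm
    · have h1 : φ (1 - p) (p * a) = 0 := by
        apply h; rw [sub_mul, one_mul, ← mul_assoc, hp, sub_self]
      have h2 : φ p (a - p * a) = 0 := by
        apply h; rw [mul_sub, ← mul_assoc, hp, sub_self]
      rw [map_sub, LinearMap.sub_apply, sub_eq_zero] at h1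
      rw [map_sub, sub_eq_zero] at h2
      exact h2.trans h1.symm
  | zero => simp
  | add y z hy hz ihy ihz =>
    obtain ⟨hy1, hy2⟩ := ihy
    obtain ⟨hz1, hz2⟩ := ihz
    constructor
    · rw [map_add, hy1, hz1, mul_add, map_add]
      simp
    · rw [map_add, LinearMap.add_apply, hy2, hz2, add_mul, map_add]
  | smul c y hy ihy =>
    obtain ⟨hy1, hy2⟩ := ihy
    constructor
    · rw [map_smul, hy1, mul_smul_comm, map_smul]; rfl
    · rw [map_smul, LinearMap.smul_apply, hy2, smul_mul_assoc, map_smul]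
end

section
/- Let A be a unital associative algebra over ℂ such that A = Im(A), let X be a ℂ-vector space, and let φ : A × A → X be a ℂ-bilinear map such that φ(a,b) = 0 whenever a, b ∈ A satisfy ab = 0. Then there exists a ℂ-linear map T : A → X such that φ(a,b) = T(ab) for all a, b ∈ A (i.e., A is zero product determined). -/
/-- Theorem 3.1 (second part): a unital complex algebra spanned by its idempotents is
zero product determined. -/
theorem zero_product_determined_of_span_idempotents
    {A X : Type*} [Ring A] [Algebra ℂ A] [AddCommGroup X] [Module ℂ X]
    (hA : Submodule.span ℂ {p : A | p * p = p} = ⊤)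
    (φ : A →ₗ[ℂ] A →ₗ[ℂ] X)
    (h : ∀ a b : A, a * b = 0 → φ a b = 0) :
    ∃ T : A →ₗ[ℂ] X, ∀ a b : A, φ a b = T (a * b) := by
  have key : ∀ a b c : A, φ (a * c) b = φ a (c * b) := by
    intro a b c
    have hc : c ∈ Submodule.span ℂ {p : A | p * p = p} := hA ▸ Submodule.mem_top
    induction hc using Submodule.span_induction with
    | mem p hp =>
        have hp' : p * p = p := hp
        have h1 : (a * p) * (b - p * b) = 0 := by
          rw [mul_sub, ← mul_assoc (a * p) p b, mul_assoc a p p, hp', sub_self]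
        have h2 : (a - a * p) * (p * b) = 0 := by
          rw [sub_mul, ← mul_assoc (a * p) p b, mul_assoc a p p, hp',
            ← mul_assoc a p b, sub_self]
        have e1 := h _ _ h1
        have e2 := h _ _ h2
        simp only [map_sub, LinearMap.sub_apply, sub_eq_zero] at e1 e2
        rw [e1, ← e2]
    | zero => simp
    | add x y hx hy ihx ihy =>
        simp only [mul_add, add_mul, map_add, LinearMap.add_apply, ihx, ihy]
    | smul r x hx ih =>
        simp only [mul_smul_comm, smul_mul_assoc, map_smul, LinearMap.smul_apply, ih]
  refine ⟨φ.flip 1, fun a b => ?_⟩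
  have := key a 1 b
  simpa using (key a 1 b).symm
end

section
/- Let A be a unital complex Banach algebra, let X be a complex Banach space, and let φ : A × A → X be a continuous ℂ-bilinear map such that φ(a,b) = 0 whenever a, b ∈ A satisfy ab = 0. Then φ(a,x) = φ(ax, 1) and φ(x,a) = φ(1, xa) for every a ∈ A and every x in the norm closure of Im(A). -/
/-- Proposition 3.2 (first part): if a continuous bilinear map `φ` on a unital complex
Banach algebra vanishes on pairs with zero product, then `φ(a,x) = φ(ax,1)` and
`φ(x,a) = φ(1,xa)` for all `a ∈ A` and `x` in the norm closure of the span of idempotents. -/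
theorem continuous_bilinear_zero_product_closure_span_idempotents
    {A X : Type*} [NormedRing A] [NormedAlgebra ℂ A] [CompleteSpace A]
    [NormedAddCommGroup X] [NormedSpace ℂ X] [CompleteSpace X]
    (φ : A →L[ℂ] A →L[ℂ] X)
    (h : ∀ a b : A, a * b = 0 → φ a b = 0) :
    ∀ a : A, ∀ x ∈ closure ((Submodule.span ℂ {p : A | p * p = p} : Submodule ℂ A) : Set A),
      φ a x = φ (a * x) 1 ∧ φ x a = φ 1 (x * a) := by
  set S : Set A := {x | ∀ c b : A, φ (c * x) b = φ c (x * b)} with hSdef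
  have hclosed : IsClosed S := by
    have : S = ⋂ (c : A), ⋂ (b : A), {x : A | φ (c * x) b = φ c (x * b)} := by
      ext x; simp [hSdef, Set.mem_iInter]
    rw [this]
    refine isClosed_iInter fun c => isClosed_iInter fun b => isClosed_eq ?_ ?_
    · exact ((φ.flip b).continuous).comp (continuous_const.mul continuous_id)
    · exact ((φ c).continuous).comp (continuous_id.mul continuous_const)
  have hidem : ∀ p : A, p * p = p → p ∈ S := by
    intro p hp c b
    have hp1 : p * (1 - p) = 0 := by rw [mul_sub, mul_one, hp, sub_self]
    have hp2 : (1 - p) * p = 0 := by rw [sub_mul, one_mul, hp, sub_self]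
    have h1 : φ (c * p) ((1 - p) * b) = 0 := by
      apply h
      rw [mul_assoc, ← mul_assoc p, hp1, zero_mul, mul_zero]
    have h2 : φ (c * (1 - p)) (p * b) = 0 := by
      apply h
      rw [mul_assoc, ← mul_assoc (1 - p), hp2, zero_mul, mul_zero]
    have e1 : φ (c * p) b = φ (c * p) (p * b) := by
      have hb : b = p * b + (1 - p) * b := by rw [← add_mul]; simp
      conv_lhs => rw [hb]
      rw [map_add, h1, add_zero]
    have e2 : φ c (p * b) = φ (c * p) (p * b) := by
      have hc : c = c * p + c * (1 - p) := by rw [← mul_add]; simp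
      conv_lhs => rw [hc]
      rw [map_add, ContinuousLinearMap.add_apply, h2, add_zero]
    rw [e1, e2]
  have hspan : ((Submodule.span ℂ {p : A | p * p = p} : Submodule ℂ A) : Set A) ⊆ S := by
    intro x hx
    induction hx using Submodule.span_induction with
    | mem p hp => exact hidem p hp
    | zero => intro c b; simp
    | add u v _ _ hu hv =>
      intro c b
      simp only [mul_add, add_mul, map_add, ContinuousLinearMap.add_apply]
      rw [hu c b, hv c b]
    | smul t u _ hu =>
      intro c b
      have := hu c b
      simp only [mul_smul_comm, smul_mul_assoc, map_smul, ContinuousLinearMap.smul_apply] at *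
      rw [this]
  have hclS : closure ((Submodule.span ℂ {p : A | p * p = p} : Submodule ℂ A) : Set A) ⊆ S :=
    hclosed.closure_subset_iff.mpr hspan
  intro a x hx
  have hxS := hclS hx
  constructor
  · have := hxS a 1
    rw [mul_one] at this
    exact this.symm
  · have := hxS 1 a
    rw [one_mul] at this
    exact this
end

section
/- Let A be a unital complex Banach algebra equal to the norm closure of Im(A), let X be a complex Banach space, and let φ : A × A → X be a continuous ℂ-bilinear map such that φ(a,b) = 0 whenever a, b ∈ A satisfy ab = 0. Then there exists a continuous ℂ-linear map T : A → X such that φ(a,b) = T(ab) for all a, b ∈ A. -/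
/-- Proposition 3.2 (second part): if a unital complex Banach algebra equals the norm
closure of the span of its idempotents, then every continuous bilinear map vanishing on
pairs with zero product factors continuously through the product. -/
theorem continuous_zero_product_determined_of_closure_span_idempotents
    {A X : Type*} [NormedRing A] [NormedAlgebra ℂ A] [CompleteSpace A]
    [NormedAddCommGroup X] [NormedSpace ℂ X] [CompleteSpace X]
    (hA : closure ((Submodule.span ℂ {p : A | p * p = p} : Submodule ℂ A) : Set A) = Set.univ)
    (φ : A →L[ℂ] A →L[ℂ] X)
    (h : ∀ a b : A, a * b = 0 → φ a b = 0) :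
    ∃ T : A →L[ℂ] X, ∀ a b : A, φ a b = T (a * b) := by
  -- Key identity for idempotents: φ (a*p) b = φ a (p*b)
  have key : ∀ p : A, p * p = p → ∀ a b : A, φ (a * p) b = φ a (p * b) := by
    intro p hp a b
    have h1 : φ (a * p) (b - p * b) = 0 := by
      apply h
      have : (a * p) * (b - p * b) = a * ((p - p * p) * b) := by noncomm_ring
      rw [this, hp]; simp
    have h2 : φ (a - a * p) (p * b) = 0 := by
      apply h
      have : (a - a * p) * (p * b) = a * ((p - p * p) * b) := by noncomm_ring
      rw [this, hp]; simp
    have e1 : φ (a * p) b = φ (a * p) (p * b) := by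
      rw [map_sub] at h1
      exact sub_eq_zero.mp h1
    have e2 : φ a (p * b) = φ (a * p) (p * b) := by
      rw [map_sub, ContinuousLinearMap.sub_apply] at h2
      exact sub_eq_zero.mp h2
    rw [e1, e2]
  -- Extend to all c : φ (a*c) b = φ a (c*b)
  have key2 : ∀ a c b : A, φ (a * c) b = φ a (c * b) := by
    intro a c b
    set L : A →L[ℂ] X :=
      ((φ.flip b).comp ((ContinuousLinearMap.mul ℂ A) a)) -
        ((φ a).comp ((ContinuousLinearMap.mul ℂ A).flip b)) with hL
    have hLapp : ∀ x : A, L x = φ (a * x) b - φ a (x * b) := by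
      intro x; simp [hL]
    have hzero : ∀ x : A, L x = 0 := by
      intro x
      have hmem : x ∈ closure ((Submodule.span ℂ {p : A | p * p = p} : Submodule ℂ A) : Set A) := by
        rw [hA]; trivial
      have hclosed : IsClosed {y : A | L y = 0} :=
        isClosed_eq L.continuous continuous_const
      have hsub : ((Submodule.span ℂ {p : A | p * p = p} : Submodule ℂ A) : Set A) ⊆
          {y : A | L y = 0} := by
        intro y hy
        induction hy using Submodule.span_induction with
        | mem p hp =>
          have := key p hp a b
          simp only [Set.mem_setOf_eq, hLapp]
          rw [this, sub_self]
        | zero => simp [Set.mem_setOf_eq]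
        | add u v _ _ hu hv =>
          simp only [Set.mem_setOf_eq, map_add] at *
          rw [hu, hv, add_zero]
        | smul r u _ hu =>
          simp only [Set.mem_setOf_eq, map_smul] at *
          rw [hu, smul_zero]
      exact closure_minimal hsub hclosed hmem
    have := hzero c
    rw [hLapp] at this
    exact sub_eq_zero.mp this
  refine ⟨φ 1, fun a b => ?_⟩
  have := key2 1 a b
  rwa [one_mul] at this
end

section
/- Let A be a unital associative algebra over ℂ, let X be a ℂ-vector space, and let φ : A × A → X be a ℂ-bilinear map such that φ(a,b) = 0 whenever a, b ∈ A satisfy a∘b = 0. Then φ(a,x) = (1/2)φ(ax, 1) + (1/2)φ(xa, 1) for every a ∈ A and every x ∈ Im(A). -/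
lemma key_idem {A X : Type*} [Ring A] [Algebra ℂ A] [AddCommGroup X] [Module ℂ X]
    (φ : A →ₗ[ℂ] A →ₗ[ℂ] X)
    (h : ∀ a b : A, a * b + b * a = 0 → φ a b = 0)
    (a p : A) (hp : p * p = p) :
    φ a p = ((1 : ℂ)/2) • φ (a * p) 1 + ((1 : ℂ)/2) • φ (p * a) 1 := by
  have hpp : ∀ x : A, p * (p * x) = p * x := fun x => by rw [← mul_assoc, hp]
  have h1 : φ (a - p*a - a*p + p*a*p) p = 0 := by
    apply h
    simp only [mul_sub, sub_mul, mul_add, add_mul, mul_assoc, hp, hpp]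
    abel
  have h2 : φ (p*a - p*a*p) (1 - p - p) = 0 := by
    apply h
    simp only [mul_sub, sub_mul, mul_one, one_mul, mul_assoc, hp, hpp]
    abel
  have h3 : φ (a*p - p*a*p) (1 - p - p) = 0 := by
    apply h
    simp only [mul_sub, sub_mul, mul_one, one_mul, mul_assoc, hp, hpp]
    abel
  have h4 : φ (p*a*p) (1 - p) = 0 := by
    apply h
    simp only [mul_sub, sub_mul, mul_one, one_mul, mul_assoc, hp, hpp]
    abel
  simp only [map_add, map_sub, LinearMap.add_apply, LinearMap.sub_apply] at *
  rw [sub_eq_zero] at h4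
  -- h2 : φ (p*a) 1 - φ(pap) 1 - (φ(pa) p - φ(pap) p) - (φ(pa) p - φ(pap) p) = 0 etc.
  have c2 : φ (p*a) 1 - φ (p*a*p) 1 = (2:ℂ) • (φ (p*a) p - φ (p*a*p) p) := by
    have := h2
    rw [sub_sub, sub_eq_zero] at this
    rw [this]; module
  have c3 : φ (a*p) 1 - φ (p*a*p) 1 = (2:ℂ) • (φ (a*p) p - φ (p*a*p) p) := by
    have := h3
    rw [sub_sub, sub_eq_zero] at this
    rw [this]; module
  have c1 : φ a p - φ (p*a) p - φ (a*p) p + φ (p*a*p) p = 0 := h1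
  have expand2 : φ (p*a) 1 = φ (p*a*p) 1 + (2:ℂ) • (φ (p*a) p - φ (p*a*p) p) := by
    rw [← c2]; abel
  have expand3 : φ (a*p) 1 = φ (p*a*p) 1 + (2:ℂ) • (φ (a*p) p - φ (p*a*p) p) := by
    rw [← c3]; abel
  have ha : φ a p = φ (p*a) p + φ (a*p) p - φ (p*a*p) p := by
    rw [← sub_eq_zero]; rw [← c1]; abel
  rw [ha, expand2, expand3, h4]
  module

/-- Theorem 3.3 (first part): if a bilinear map `φ` vanishes on pairs with zero Jordan
product, then `φ(a,x) = (1/2)φ(ax,1) + (1/2)φ(xa,1)` for all `a ∈ A` and `x` in the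
linear span of the idempotents of `A`. -/
theorem bilinear_zero_jordan_product_span_idempotents
    {A X : Type*} [Ring A] [Algebra ℂ A] [AddCommGroup X] [Module ℂ X]
    (φ : A →ₗ[ℂ] A →ₗ[ℂ] X)
    (h : ∀ a b : A, a * b + b * a = 0 → φ a b = 0) :
    ∀ a : A, ∀ x ∈ Submodule.span ℂ {p : A | p * p = p},
      φ a x = ((1 : ℂ)/2) • φ (a * x) 1 + ((1 : ℂ)/2) • φ (x * a) 1 := by
  intro a x hx
  induction hx using Submodule.span_induction with
  | mem p hp => exact key_idem φ h a p hp
  | zero => simp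
  | add y z _ _ hy hz =>
      simp only [map_add, LinearMap.add_apply, mul_add, add_mul] at *
      rw [hy, hz]; module
  | smul c y _ hy =>
      simp only [map_smul, LinearMap.smul_apply, mul_smul_comm, smul_mul_assoc] at *
      rw [hy]; module
end

section
/- Let A be a unital associative algebra over ℂ such that A = Im(A), let X be a ℂ-vector space, and let φ : A × A → X be a ℂ-bilinear map such that φ(a,b) = 0 whenever a, b ∈ A satisfy a∘b = 0. Then there exists a ℂ-linear map T : A → X such that φ(a,b) = T(a∘b) for all a, b ∈ A (i.e., A is zero Jordan product determined). -/
/-- Theorem 3.3 (second part): a unital complex algebra spanned by its idempotents is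
zero Jordan product determined. -/
theorem zero_jordan_product_determined_of_span_idempotents
    {A X : Type*} [Ring A] [Algebra ℂ A] [AddCommGroup X] [Module ℂ X]
    (hA : Submodule.span ℂ {p : A | p * p = p} = ⊤)
    (φ : A →ₗ[ℂ] A →ₗ[ℂ] X)
    (h : ∀ a b : A, a * b + b * a = 0 → φ a b = 0) :
    ∃ T : A →ₗ[ℂ] X, ∀ a b : A, φ a b = T (a * b + b * a) := by
  refine ⟨(2⁻¹ : ℂ) • (φ 1), fun a b => ?_⟩
  -- key step: the claim for idempotents
  have key : ∀ p : A, p * p = p →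
      φ p b = ((2⁻¹ : ℂ) • (φ 1)) (p * b + b * p) := by
    intro p hp
    have e1 : ∀ x : A, p * ((1 - p) * x) = 0 := fun x => by
      rw [← mul_assoc]; simp [mul_sub, hp]
    have e2 : ∀ x : A, (1 - p) * (p * x) = 0 := fun x => by
      rw [← mul_assoc]; simp [sub_mul, hp]
    have e3 : ∀ x : A, p * (p * x) = p * x := fun x => by
      rw [← mul_assoc, hp]
    have e4 : ∀ x : A, (1 - p) * ((1 - p) * x) = (1 - p) * x := fun x => by
      rw [← mul_assoc]; simp [sub_mul, mul_sub, hp]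
    have e1' : p * (1 - p) = 0 := by simp [mul_sub, hp]
    have e2' : (1 - p) * p = 0 := by simp [sub_mul, hp]
    -- Peirce-type zero Jordan products
    have z1 : φ p ((1 - p) * b * (1 - p)) = 0 := by
      apply h
      simp [mul_assoc, e1, e2', e1']
    have z2 : φ (1 - p) (p * b * p) = 0 := by
      apply h
      simp [mul_assoc, e2, e1', e2']
    have z3 : φ (p - (1 - p)) (p * b * (1 - p)) = 0 := by
      apply h
      simp only [sub_mul, mul_sub, mul_assoc, e1, e2, e3, e4, hp, one_mul, mul_one, mul_zero,
        sub_zero, zero_sub]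
      abel
    have z4 : φ (p - (1 - p)) ((1 - p) * b * p) = 0 := by
      apply h
      simp only [sub_mul, mul_sub, mul_assoc, e1, e2, e3, e4, hp, one_mul, mul_one, mul_zero,
        sub_zero, zero_sub]
      abel
    -- rewrite the hypotheses into usable form
    have d2 : φ p (p * b * p) = φ 1 (p * b * p) := by
      have : φ 1 (p * b * p) = φ p (p * b * p) + φ (1 - p) (p * b * p) := by
        rw [← LinearMap.add_apply, ← map_add, add_sub_cancel]
      rw [this, z2, add_zero]
    have d3 : φ p (p * b * (1 - p)) = (2⁻¹ : ℂ) • φ 1 (p * b * (1 - p)) := by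
      have hs : φ p (p * b * (1 - p)) = φ (1 - p) (p * b * (1 - p)) := by
        have := z3
        rw [map_sub, LinearMap.sub_apply, sub_eq_zero] at this
        exact this
      have h1 : φ 1 (p * b * (1 - p)) = φ p (p * b * (1 - p)) + φ (1 - p) (p * b * (1 - p)) := by
        rw [← LinearMap.add_apply, ← map_add, add_sub_cancel]
      rw [h1, ← hs, smul_add, ← two_smul ℂ, smul_smul]
      norm_num
    have d4 : φ p ((1 - p) * b * p) = (2⁻¹ : ℂ) • φ 1 ((1 - p) * b * p) := by
      have hs : φ p ((1 - p) * b * p) = φ (1 - p) ((1 - p) * b * p) := by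
        have := z4
        rw [map_sub, LinearMap.sub_apply, sub_eq_zero] at this
        exact this
      have h1 : φ 1 ((1 - p) * b * p) = φ p ((1 - p) * b * p) + φ (1 - p) ((1 - p) * b * p) := by
        rw [← LinearMap.add_apply, ← map_add, add_sub_cancel]
      rw [h1, ← hs, smul_add, ← two_smul ℂ, smul_smul]
      norm_num
    -- decompose b and p∘b
    have hb : b = p * b * p + (p * b * (1 - p) + ((1 - p) * b * p + (1 - p) * b * (1 - p))) := by
      noncomm_ring
    have hpb : p * b + b * p
        = (p * b * p + p * b * p) + (p * b * (1 - p) + (1 - p) * b * p) := by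
      noncomm_ring
    rw [LinearMap.smul_apply, hpb]
    conv_lhs => rw [hb]
    simp only [map_add]
    rw [z1, d2, d3, d4]
    module
  -- extend from idempotents to all of A by linearity in the first variable
  have ha : a ∈ Submodule.span ℂ {p : A | p * p = p} := by rw [hA]; trivial
  induction ha using Submodule.span_induction with
  | mem x hx => exact key x hx
  | zero => simp
  | add x y hx hy ihx ihy =>
      have hxy : (x + y) * b + b * (x + y) = (x * b + b * x) + (y * b + b * y) := by noncomm_ring
      calc φ (x + y) b = φ x b + φ y b := by rw [map_add, LinearMap.add_apply]
        _ = ((2⁻¹ : ℂ) • φ 1) (x * b + b * x) + ((2⁻¹ : ℂ) • φ 1) (y * b + b * y) := by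
            rw [ihx, ihy]
        _ = _ := by rw [← map_add, ← hxy]
  | smul c x hx ih =>
      have : (c • x) * b + b * (c • x) = c • (x * b + b * x) := by
        rw [smul_mul_assoc, mul_smul_comm, smul_add]
      rw [map_smul, LinearMap.smul_apply, ih, this, map_smul]
end

section
/- Let A be a unital complex Banach algebra, let X be a complex Banach space, and let φ : A × A → X be a continuous ℂ-bilinear map such that φ(a,b) = 0 whenever a, b ∈ A satisfy a∘b = 0. Then φ(a,x) = (1/2)φ(ax, 1) + (1/2)φ(xa, 1) for every a ∈ A and every x in the norm closure of Im(A). -/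
/-!
For an idempotent `p`, the Peirce decomposition writes every `a` as a sum of eigenvectors `x` of
`x ↦ x * p + p * x`, with eigenvalues `2`, `1`, `0`. For such an eigenvector with eigenvalue `n`,
the Jordan product of `x` with `n - 2p` vanishes, so `φ(x, n - 2p) = 0`, which is the identity
`2 φ(x, p) = φ(x ∘ p, 1)`; summing over the components gives `2 φ(a, p) = φ(ap + pa, 1)`.
Both sides of the claimed identity are continuous and linear in `x`, so it passes from idempotents
to the closure of their span.
-/

section Biadditive

variable {A X : Type*} [Ring A] [AddCommGroup X] (φ : A →+ A →+ X)

theorem two_nsmul_apply_eq_of_jordan_eq_nsmul (hφ : ∀ a b : A, a * b + b * a = 0 → φ a b = 0)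
    {x p : A} {n : ℕ} (hx : x * p + p * x = n • x) :
    2 • φ x p = φ (x * p + p * x) 1 := by
  have hzero : φ x (n • 1 - 2 • p) = 0 := hφ _ _ <|
    calc x * (n • 1 - 2 • p) + (n • 1 - 2 • p) * x = n • x + n • x - 2 • (x * p + p * x) := by
          noncomm_ring
      _ = 0 := by rw [hx]; abel
  rw [map_sub, map_nsmul, map_nsmul, sub_eq_zero] at hzero
  rw [hx, map_nsmul, AddMonoidHom.nsmul_apply, hzero]

theorem two_nsmul_apply_of_isIdempotentElem (hφ : ∀ a b : A, a * b + b * a = 0 → φ a b = 0)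
    {p : A} (hp : IsIdempotentElem p) (a : A) :
    2 • φ a p = φ (a * p + p * a) 1 := by
  have hp : p * p = p := hp
  have hdiag : (p * a * p) * p + p * (p * a * p) = 2 • (p * a * p) :=
    calc _ = p * a * (p * p) + (p * p) * a * p := by noncomm_ring
      _ = _ := by rw [hp]; noncomm_ring
  have hoff : (p * a * (1 - p) + (1 - p) * a * p) * p + p * (p * a * (1 - p) + (1 - p) * a * p)
      = 1 • (p * a * (1 - p) + (1 - p) * a * p) :=
    calc _ = p * a * (p - p * p) + (a - p * a) * (p * p) + (p * p) * a
          - (p * p) * a * p + (p - p * p) * a * p := by noncomm_ring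
      _ = _ := by rw [hp]; noncomm_ring
  have hcodiag : ((1 - p) * a * (1 - p)) * p + p * ((1 - p) * a * (1 - p))
      = 0 • ((1 - p) * a * (1 - p)) :=
    calc _ = (1 - p) * a * (p - p * p) + (p - p * p) * a * (1 - p) := by noncomm_ring
      _ = _ := by rw [hp, zero_nsmul]; noncomm_ring
  have hpeirce : a = p * a * p + (p * a * (1 - p) + (1 - p) * a * p) + (1 - p) * a * (1 - p) := by
    noncomm_ring
  conv_lhs => rw [hpeirce]
  rw [map_add, map_add, AddMonoidHom.add_apply, AddMonoidHom.add_apply, nsmul_add, nsmul_add,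
    two_nsmul_apply_eq_of_jordan_eq_nsmul φ hφ hdiag,
    two_nsmul_apply_eq_of_jordan_eq_nsmul φ hφ hoff,
    two_nsmul_apply_eq_of_jordan_eq_nsmul φ hφ hcodiag,
    ← AddMonoidHom.add_apply, ← AddMonoidHom.add_apply, ← map_add, ← map_add]
  congr 2
  noncomm_ring

end Biadditive

open ContinuousLinearMap in
theorem continuous_bilinear_zero_jordan_product_closure_span_idempotents_general
    {A X : Type*} [NormedRing A] [NormedAlgebra ℂ A]
    [NormedAddCommGroup X] [NormedSpace ℂ X]
    (φ : A →L[ℂ] A →L[ℂ] X)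
    (h : ∀ a b : A, a * b + b * a = 0 → φ a b = 0) :
    ∀ a : A, ∀ x ∈ closure ((Submodule.span ℂ {p : A | p * p = p} : Submodule ℂ A) : Set A),
      φ a x = ((1 : ℂ)/2) • φ (a * x) 1 + ((1 : ℂ)/2) • φ (x * a) 1 := by
  intro a x hx
  have hidem : Set.EqOn (φ a) (((1 / 2 : ℂ) • ((φ.flip 1).comp (mul ℂ A a)
      + (φ.flip 1).comp ((mul ℂ A).flip a)) : A →L[ℂ] X)) {p | p * p = p} := by
    intro p hp
    have hp2 : 2 • φ a p = φ (a * p + p * a) 1 := two_nsmul_apply_of_isIdempotentElem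
      (LinearMap.toAddMonoidHom'.comp φ.toLinearMap₁₂.toAddMonoidHom) h hp a
    rw [map_add, add_apply, ← Nat.cast_smul_eq_nsmul ℂ] at hp2
    simp only [smul_apply, add_apply, comp_apply, flip_apply, mul_apply']
    rw [← hp2, smul_smul]
    norm_num
  simpa [smul_add] using eqOn_closure_span hidem hx

/-- Proposition 3.4 (first part): if a continuous bilinear map `φ` on a unital complex
Banach algebra vanishes on pairs with zero Jordan product, then
`φ(a,x) = (1/2)φ(ax,1) + (1/2)φ(xa,1)` for all `a ∈ A` and `x` in the norm closure of the
span of idempotents. -/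
theorem continuous_bilinear_zero_jordan_product_closure_span_idempotents
    {A X : Type*} [NormedRing A] [NormedAlgebra ℂ A] [CompleteSpace A]
    [NormedAddCommGroup X] [NormedSpace ℂ X] [CompleteSpace X]
    (φ : A →L[ℂ] A →L[ℂ] X)
    (h : ∀ a b : A, a * b + b * a = 0 → φ a b = 0) :
    ∀ a : A, ∀ x ∈ closure ((Submodule.span ℂ {p : A | p * p = p} : Submodule ℂ A) : Set A),
      φ a x = ((1 : ℂ)/2) • φ (a * x) 1 + ((1 : ℂ)/2) • φ (x * a) 1 :=
  continuous_bilinear_zero_jordan_product_closure_span_idempotents_general φ h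
end

section
/- Let A be a unital complex Banach algebra equal to the norm closure of Im(A), let X be a complex Banach space, and let φ : A × A → X be a continuous ℂ-bilinear map such that φ(a,b) = 0 whenever a, b ∈ A satisfy a∘b = 0. Then there exists a continuous ℂ-linear map T : A → X such that φ(a,b) = T(a∘b) for all a, b ∈ A. -/
/-!
For an idempotent `p` with `q = 1 - p`, split `b` into its Peirce parts `pbp`, `qbq` and
`v = pbq + qbp`. The pairs `(p, qbq)`, `(q, pbp)` and `(p - q, v)` all have zero Jordan product,
which forces `2 φ(p, b) = φ(1, p ∘ b)`. Both sides of `φ(a, b) = ½ φ(1, a ∘ b)` are continuous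
and linear in `a`, so the identity spreads from the idempotents to the closure of their span.
-/

theorem LinearMap.apply_add_apply_eq_apply_one_jordan_of_isIdempotentElem
    {R A X : Type*} [CommSemiring R] [Ring A] [Module R A] [AddCommGroup X] [Module R X]
    (φ : A →ₗ[R] A →ₗ[R] X) (h : ∀ a b : A, a * b + b * a = 0 → φ a b = 0)
    {p : A} (hp : IsIdempotentElem p) (b : A) :
    φ p b + φ p b = φ 1 (p * b + b * p) := by
  obtain ⟨q, hq⟩ : ∃ q : A, q = 1 - p := ⟨_, rfl⟩
  have hpq : p * q = 0 := hq ▸ hp.mul_one_sub_self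
  have hqp : q * p = 0 := hq ▸ hp.one_sub_mul_self
  have hpp (x : A) : p * (p * x) = p * x := by rw [← mul_assoc, hp.eq]
  obtain ⟨v, hv⟩ : ∃ v : A, v = p * b * q + q * b * p := ⟨_, rfl⟩
  have hb : b = p * b * p + v + q * b * q := by rw [hv, hq]; noncomm_ring
  have hjordan : p * b + b * p = p * b * p + p * b * p + v := by rw [hv, hq]; noncomm_ring
  have hp_qbq : φ p (q * b * q) = 0 := h _ _ <| by
    rw [mul_assoc (q * b) q p, hqp, mul_zero, ← mul_assoc, ← mul_assoc, hpq, zero_mul, zero_mul,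
      add_zero]
  have hq_pbp : φ q (p * b * p) = 0 := h _ _ <| by
    rw [mul_assoc (p * b) p q, hpq, mul_zero, ← mul_assoc, ← mul_assoc, hqp, zero_mul, zero_mul,
      add_zero]
  have hφv : φ p v = φ q v := by
    rw [← sub_eq_zero, ← LinearMap.sub_apply, ← map_sub]
    exact h _ _ <| by rw [hv, hq]; noncomm_ring [hp.eq, hpp]
  have hφb : φ p b = φ p (p * b * p) + φ p v := by
    conv_lhs => rw [hb]
    rw [map_add, map_add, hp_qbq, add_zero]
  have hone : (1 : A) = p + q := by rw [hq, add_sub_cancel]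
  rw [hjordan, hone, hφb]
  simp only [map_add, LinearMap.add_apply, hq_pbp, ← hφv]
  abel

theorem continuous_zero_jordan_product_determined_of_closure_span_idempotents_general
    {A X : Type*} [NormedRing A] [NormedAlgebra ℂ A]
    [NormedAddCommGroup X] [NormedSpace ℂ X]
    (hA : closure ((Submodule.span ℂ {p : A | p * p = p} : Submodule ℂ A) : Set A) = Set.univ)
    (φ : A →L[ℂ] A →L[ℂ] X)
    (h : ∀ a b : A, a * b + b * a = 0 → φ a b = 0) :
    ∃ T : A →L[ℂ] X, ∀ a b : A, φ a b = T (a * b + b * a) := by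
  refine ⟨(2⁻¹ : ℂ) • φ 1, fun a b => ?_⟩
  let jordanMulRight : A →L[ℂ] A := (ContinuousLinearMap.mul ℂ A).flip b + .mul ℂ A b
  have hφb : φ.flip b = ((2⁻¹ : ℂ) • φ 1).comp jordanMulRight := by
    refine ContinuousLinearMap.ext_on (dense_iff_closure_eq.mpr hA) fun p hp => ?_
    have hφp := φ.toLinearMap₁₂.apply_add_apply_eq_apply_one_jordan_of_isIdempotentElem h hp b
    rw [← two_smul ℂ] at hφp
    simp only [ContinuousLinearMap.toLinearMap₁₂_apply_apply_apply] at hφp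
    change φ p b = (2⁻¹ : ℂ) • φ 1 (p * b + b * p)
    rw [← hφp, inv_smul_smul₀ two_ne_zero]
  exact congr($hφb a)

/-- Proposition 3.4 (second part): if a unital complex Banach algebra equals the norm
closure of the span of its idempotents, then every continuous bilinear map vanishing on
pairs with zero Jordan product factors continuously through the Jordan product. -/
theorem continuous_zero_jordan_product_determined_of_closure_span_idempotents
    {A X : Type*} [NormedRing A] [NormedAlgebra ℂ A] [CompleteSpace A]
    [NormedAddCommGroup X] [NormedSpace ℂ X] [CompleteSpace X]
    (hA : closure ((Submodule.span ℂ {p : A | p * p = p} : Submodule ℂ A) : Set A) = Set.univ)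
    (φ : A →L[ℂ] A →L[ℂ] X)
    (h : ∀ a b : A, a * b + b * a = 0 → φ a b = 0) :
    ∃ T : A →L[ℂ] X, ∀ a b : A, φ a b = T (a * b + b * a) :=
  continuous_zero_jordan_product_determined_of_closure_span_idempotents_general hA φ h
end

section
/- Let A be a unital associative algebra over ℂ, let X be a ℂ-vector space, and let φ : A × A → X be a ℂ-bilinear map such that φ(a,b) = 0 whenever a, b ∈ A satisfy ab = ba = 0. Then φ(a,x) + φ(x,a) = φ(ax, 1) + φ(1, xa) and φ(x,1) = φ(1,x) for every a ∈ A and every x ∈ Im(A). -/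
section Aux

variable {A X : Type*} [Ring A] [Algebra ℂ A] [AddCommGroup X] [Module ℂ X]

/-- For an idempotent `e`, `φ e (1-e) = 0` and `φ (1-e) e = 0`. -/
private lemma idem_orth (φ : A →ₗ[ℂ] A →ₗ[ℂ] X)
    (h : ∀ a b : A, a * b = 0 → b * a = 0 → φ a b = 0)
    {e : A} (he : e * e = e) : φ e (1 - e) = 0 ∧ φ (1 - e) e = 0 := by
  have h1 : e * (1 - e) = 0 := by rw [mul_sub, mul_one, he, sub_self]
  have h2 : (1 - e) * e = 0 := by rw [sub_mul, one_mul, he, sub_self]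
  exact ⟨h e (1 - e) h1 h2, h (1 - e) e h2 h1⟩

private lemma idem_case (φ : A →ₗ[ℂ] A →ₗ[ℂ] X)
    (h : ∀ a b : A, a * b = 0 → b * a = 0 → φ a b = 0)
    {p : A} (hp : p * p = p) (a : A) :
    φ a p + φ p a = φ (a * p) 1 + φ 1 (p * a) := by
  obtain ⟨q, hq⟩ : ∃ q : A, q = 1 - p := ⟨1 - p, rfl⟩
  have hpq : p * q = 0 := by rw [hq, mul_sub, mul_one, hp, sub_self]
  have hqp : q * p = 0 := by rw [hq, sub_mul, one_mul, hp, sub_self]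
  -- orthogonality helpers
  have keyqp : ∀ x y : A, x * q * (p * y) = 0 := fun x y => by
    rw [mul_assoc, ← mul_assoc q p, hqp, zero_mul, mul_zero]
  have keypq : ∀ x y : A, x * p * (q * y) = 0 := fun x y => by
    rw [mul_assoc, ← mul_assoc p q, hpq, zero_mul, mul_zero]
  obtain ⟨u, hu⟩ : ∃ u : A, u = p * a * q := ⟨_, rfl⟩
  obtain ⟨v, hv⟩ : ∃ v : A, v = q * a * p := ⟨_, rfl⟩
  obtain ⟨w11, hw11⟩ : ∃ w : A, w = p * a * p := ⟨_, rfl⟩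
  obtain ⟨w22, hw22⟩ : ∃ w : A, w = q * a * q := ⟨_, rfl⟩
  -- basic multiplication facts
  have hpu : p * u = u := by rw [hu, ← mul_assoc, ← mul_assoc, hp]
  have hup : u * p = 0 := by rw [hu, mul_assoc, hqp, mul_zero]
  have huu : u * u = 0 := by
    rw [hu, show p * a * q * (p * a * q) = (p * a) * q * (p * (a * q)) by noncomm_ring]
    exact keyqp _ _
  have hvp : v * p = v := by rw [hv, mul_assoc, hp]
  have hpv : p * v = 0 := by
    rw [hv, show p * (q * a * p) = 1 * p * (q * (a * p)) by noncomm_ring]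
    exact keypq _ _
  have hvv : v * v = 0 := by
    rw [hv, show q * a * p * (q * a * p) = (q * a) * p * (q * (a * p)) by noncomm_ring]
    exact keypq _ _
  -- Peirce decomposition facts (pure ring identities)
  have ha : a = w11 + u + v + w22 := by rw [hw11, hu, hv, hw22, hq]; noncomm_ring
  have hap : a * p = w11 + v := by rw [hw11, hv, hq]; noncomm_ring
  have hpa : p * a = w11 + u := by rw [hw11, hu, hq]; noncomm_ring
  -- vanishing pairs
  have h11q : φ w11 q = 0 := by
    refine h _ _ ?_ ?_
    · rw [hw11, mul_assoc, hpq, mul_zero]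
    · rw [hw11, show q * (p * a * p) = 1 * q * (p * (a * p)) by noncomm_ring]
      exact keyqp _ _
  have hq11 : φ q w11 = 0 := by
    refine h _ _ ?_ ?_
    · rw [hw11, show q * (p * a * p) = 1 * q * (p * (a * p)) by noncomm_ring]
      exact keyqp _ _
    · rw [hw11, mul_assoc, hpq, mul_zero]
  have h22p : φ w22 p = 0 := by
    refine h _ _ ?_ ?_
    · rw [hw22, mul_assoc, hqp, mul_zero]
    · rw [hw22, show p * (q * a * q) = 1 * p * (q * (a * q)) by noncomm_ring]
      exact keypq _ _
  have hp22 : φ p w22 = 0 := by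
    refine h _ _ ?_ ?_
    · rw [hw22, show p * (q * a * q) = 1 * p * (q * (a * q)) by noncomm_ring]
      exact keypq _ _
    · rw [hw22, mul_assoc, hqp, mul_zero]
  have hφpq : φ p q = 0 := h p q hpq hqp
  have hφqp : φ q p = 0 := h q p hqp hpq
  have hφuu : φ u u = 0 := h u u huu huu
  have hφvv : φ v v = 0 := h v v hvv hvv
  -- idempotent p + u : gives φ q u = φ u p
  have heu : (p + u) * (p + u) = p + u := by
    simp only [add_mul, mul_add, hp, hpu, hup, huu, add_zero, zero_add]
  have h1eu : (1 : A) - (p + u) = q - u := by rw [hq]; abel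
  obtain ⟨_, heu2⟩ := idem_orth φ h heu
  rw [h1eu] at heu2
  simp only [map_sub, map_add, LinearMap.sub_apply, LinearMap.add_apply] at heu2
  have exp2 : φ q u = φ u p := by
    have h' : φ q u - φ u p = 0 := by rw [← heu2, hφqp, hφuu]; abel
    exact sub_eq_zero.mp h'
  -- idempotent p + v : gives φ v q = φ p v
  have hev : (p + v) * (p + v) = p + v := by
    simp only [add_mul, mul_add, hp, hpv, hvp, hvv, add_zero, zero_add]
  have h1ev : (1 : A) - (p + v) = q - v := by rw [hq]; abel
  obtain ⟨hev1, _⟩ := idem_orth φ h hev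
  rw [h1ev] at hev1
  simp only [map_sub, map_add, LinearMap.sub_apply, LinearMap.add_apply] at hev1
  have exp1 : φ v q = φ p v := by
    have h' : φ v q - φ p v = 0 := by rw [← hev1, hφpq, hφvv]; abel
    exact sub_eq_zero.mp h'
  -- combine everything
  have hone : (1 : A) = p + q := by rw [hq]; abel
  calc φ a p + φ p a = φ (w11 + u + v + w22) p + φ p (w11 + u + v + w22) := by rw [← ha]
    _ = φ (w11 + v) (p + q) + φ (p + q) (w11 + u) := by
        simp only [map_add, LinearMap.add_apply, h11q, hq11, h22p, hp22, exp1, exp2]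
        abel
    _ = φ (a * p) 1 + φ 1 (p * a) := by rw [hap, hpa, ← hone]

end Aux

/-- Theorem 3.5: if a bilinear map `φ` satisfies condition (G), i.e. it vanishes on pairs
with `ab = ba = 0`, then `φ(a,x) + φ(x,a) = φ(ax,1) + φ(1,xa)` and `φ(x,1) = φ(1,x)`
for all `a ∈ A` and `x` in the linear span of the idempotents of `A`. -/
theorem bilinear_condition_G_span_idempotents
    {A X : Type*} [Ring A] [Algebra ℂ A] [AddCommGroup X] [Module ℂ X]
    (φ : A →ₗ[ℂ] A →ₗ[ℂ] X)
    (h : ∀ a b : A, a * b = 0 → b * a = 0 → φ a b = 0) :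
    ∀ a : A, ∀ x ∈ Submodule.span ℂ {p : A | p * p = p},
      φ a x + φ x a = φ (a * x) 1 + φ 1 (x * a) ∧ φ x 1 = φ 1 x := by
  intro a x hx
  induction hx using Submodule.span_induction with
  | mem p hp =>
      refine ⟨idem_case φ h hp a, ?_⟩
      -- φ p 1 = φ 1 p
      have hpq : p * (1 - p) = 0 := by rw [mul_sub, mul_one, hp, sub_self]
      have hqp : (1 - p) * p = 0 := by rw [sub_mul, one_mul, hp, sub_self]
      have h1 : φ p (1 - p) = 0 := h _ _ hpq hqp
      have h2 : φ (1 - p) p = 0 := h _ _ hqp hpq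
      calc φ p 1 = φ p (p + (1 - p)) := by congr 1; abel
        _ = φ p p + φ p (1 - p) := by rw [map_add]
        _ = φ p p := by rw [h1, add_zero]
        _ = φ p p + φ (1 - p) p := by rw [h2, add_zero]
        _ = φ (p + (1 - p)) p := by rw [map_add, LinearMap.add_apply]
        _ = φ 1 p := by rw [show p + (1 - p) = (1:A) by abel]
  | zero => simp
  | add y z _ _ hy hz =>
      obtain ⟨hy1, hy2⟩ := hy
      obtain ⟨hz1, hz2⟩ := hz
      constructor
      · simp only [map_add, LinearMap.add_apply, mul_add, add_mul]
        rw [show φ a y + φ a z + (φ y a + φ z a)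
            = (φ a y + φ y a) + (φ a z + φ z a) by abel, hy1, hz1]
        abel
      · simp only [map_add, LinearMap.add_apply, hy2, hz2]
  | smul c y _ hy =>
      obtain ⟨hy1, hy2⟩ := hy
      constructor
      · simp only [map_smul, LinearMap.smul_apply, mul_smul_comm, smul_mul_assoc, ← smul_add,
          hy1]
      · simp only [map_smul, LinearMap.smul_apply, hy2]
end

section
/- Let A be a unital associative algebra over ℂ such that A = Im(A), let X be a ℂ-vector space, and let φ : A × A → X be a ℂ-bilinear map. The following conditions are equivalent: (i) φ is symmetric (φ(a,b) = φ(b,a) for all a, b ∈ A) and φ(a,b) = 0 whenever ab = ba = 0; (ii) φ(a,b) = 0 whenever a∘b = 0; (iii) there exists a ℂ-linear map T : A → X such that φ(a,b) = T(a∘b) for all a, b ∈ A. -/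
section Aux

variable {A X : Type*} [Ring A] [Algebra ℂ A] [AddCommGroup X] [Module ℂ X]
  (φ : A →ₗ[ℂ] A →ₗ[ℂ] X)

/-- From the four Peirce-component relations, derive the key identity for idempotents. -/
private lemma key_of_rels (p : A) (hp : p * p = p)
    (R1 : ∀ x : A, x * p = x → p * x = x → φ x 1 = φ x p)
    (R2 : ∀ x : A, x * p = 0 → p * x = x → φ x 1 = φ x p + φ x p)
    (R3 : ∀ x : A, x * p = x → p * x = 0 → φ x 1 = φ x p + φ x p)
    (R4 : ∀ x : A, x * p = 0 → p * x = 0 → φ x p = 0)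
    (a : A) : (2 : ℂ) • φ a p = φ (a * p + p * a) 1 := by
  have e1 : φ (p*a*p) 1 = φ (p*a*p) p :=
    R1 _ (by simp only [mul_assoc, hp]) (by simp only [← mul_assoc, hp])
  have e2 : φ (p*a - p*a*p) 1 = φ (p*a - p*a*p) p + φ (p*a - p*a*p) p :=
    R2 _ (by simp only [sub_mul, mul_assoc, hp, sub_self])
      (by simp only [mul_sub, ← mul_assoc, hp])
  have e3 : φ (a*p - p*a*p) 1 = φ (a*p - p*a*p) p + φ (a*p - p*a*p) p :=
    R3 _ (by simp only [sub_mul, mul_assoc, hp])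
      (by simp only [mul_sub, ← mul_assoc, hp, sub_self])
  have e4 : φ (a - p*a - a*p + p*a*p) p = 0 :=
    R4 _ (by simp only [sub_mul, add_mul, mul_assoc, hp]; abel)
      (by simp only [mul_sub, mul_add, ← mul_assoc, hp]; abel)
  have hsum : a * p + p * a
      = ((p*a*p) + (p*a*p)) + (p*a - p*a*p) + (a*p - p*a*p) := by noncomm_ring
  have ha : a = (p*a*p) + (p*a - p*a*p) + (a*p - p*a*p) + (a - p*a - a*p + p*a*p) := by
    noncomm_ring
  rw [hsum]
  conv_lhs => rw [ha]
  simp only [map_add, LinearMap.add_apply]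
  simp only [map_add, LinearMap.add_apply] at e4
  linear_combination (norm := module) (-2:ℂ) • e1 - e2 - e3 + (2:ℂ) • e4

/-- Extension over the span of idempotents. -/
private lemma key_ext (hA : Submodule.span ℂ {p : A | p * p = p} = ⊤)
    (hkey : ∀ p : A, p * p = p → ∀ a : A, (2 : ℂ) • φ a p = φ (a * p + p * a) 1) :
    ∃ T : A →ₗ[ℂ] X, ∀ a b : A, φ a b = T (a * b + b * a) := by
  have hb : ∀ b : A, ∀ a : A, (2 : ℂ) • φ a b = φ (a * b + b * a) 1 := by
    intro b
    have hb' : b ∈ Submodule.span ℂ {p : A | p * p = p} := hA ▸ Submodule.mem_top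
    induction hb' using Submodule.span_induction with
    | mem p hp => exact hkey p hp
    | zero => intro a; simp
    | add u v _ _ hu hv =>
        intro a
        have h : a * (u + v) + (u + v) * a = (a*u + u*a) + (a*v + v*a) := by noncomm_ring
        simp only [h, map_add, LinearMap.add_apply, smul_add, hu a, hv a]
    | smul c u _ hu =>
        intro a
        have h : a * (c • u) + (c • u) * a = c • (a*u + u*a) := by
          rw [mul_smul_comm, smul_mul_assoc, smul_add]
        simp only [h, map_smul, LinearMap.smul_apply]
        rw [smul_comm, hu a]
  refine ⟨(2⁻¹ : ℂ) • (φ.flip 1), fun a b => ?_⟩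
  have h2 := hb b a
  simp only [LinearMap.smul_apply, LinearMap.flip_apply]
  rw [← h2, smul_smul]
  norm_num

/-- The relations hold under condition (ii). -/
private lemma key_of_two (h : ∀ a b : A, a * b + b * a = 0 → φ a b = 0)
    (p : A) (hp : p * p = p) (a : A) :
    (2 : ℂ) • φ a p = φ (a * p + p * a) 1 := by
  refine key_of_rels φ p hp ?_ ?_ ?_ ?_ a
  · intro x hxp hpx
    have h0 : φ x (1 - p) = 0 := h _ _ (by simp [mul_sub, sub_mul, hxp, hpx])
    rw [map_sub] at h0
    linear_combination (norm := module) h0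
  · intro x hxp hpx
    have h0 : φ x (p - (1 - p)) = 0 :=
      h _ _ (by simp only [mul_sub, sub_mul, mul_one, one_mul, hxp, hpx]; abel)
    rw [map_sub, map_sub] at h0
    linear_combination (norm := module) -h0
  · intro x hxp hpx
    have h0 : φ x (p - (1 - p)) = 0 :=
      h _ _ (by simp only [mul_sub, sub_mul, mul_one, one_mul, hxp, hpx]; abel)
    rw [map_sub, map_sub] at h0
    linear_combination (norm := module) -h0
  · intro x hxp hpx
    exact h _ _ (by rw [hxp, hpx, add_zero])

/-- The relations hold under condition (i). -/
private lemma key_of_one (hsym : ∀ a b : A, φ a b = φ b a)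
    (h0 : ∀ a b : A, a * b = 0 → b * a = 0 → φ a b = 0)
    (p : A) (hp : p * p = p) (a : A) :
    (2 : ℂ) • φ a p = φ (a * p + p * a) 1 := by
  have hpq : φ p (1 - p) = 0 :=
    h0 _ _ (by rw [mul_sub, mul_one, hp, sub_self]) (by rw [sub_mul, one_mul, hp, sub_self])
  refine key_of_rels φ p hp ?_ ?_ ?_ ?_ a
  · intro x hxp hpx
    have hz : φ x (1 - p) = 0 :=
      h0 _ _ (by rw [mul_sub, mul_one, hxp, sub_self]) (by rw [sub_mul, one_mul, hpx, sub_self])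
    rw [map_sub] at hz
    linear_combination (norm := module) hz
  · intro x hxp hpx
    have hx2 : x * x = 0 := by
      calc x * x = (x * p) * x := by rw [mul_assoc, hpx]
      _ = 0 := by rw [hxp, zero_mul]
    have he : (p + x) * (p + x) = p + x := by
      rw [mul_add, add_mul, add_mul, hp, hpx, hxp, hx2]; abel
    have hz : φ (p + x) (1 - (p + x)) = 0 :=
      h0 _ _ (by rw [mul_sub, mul_one, he, sub_self]) (by rw [sub_mul, one_mul, he, sub_self])
    have hxx : φ x x = 0 := h0 _ _ hx2 hx2
    have hs : φ p x = φ x p := hsym p x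
    simp only [map_add, map_sub, LinearMap.add_apply, LinearMap.sub_apply] at hz hpq
    linear_combination (norm := module) hz - hpq + hxx + hs
  · intro x hxp hpx
    have hx2 : x * x = 0 := by
      calc x * x = x * (p * x) := by rw [← mul_assoc, hxp]
      _ = 0 := by rw [hpx, mul_zero]
    have he : (p + x) * (p + x) = p + x := by
      rw [mul_add, add_mul, add_mul, hp, hpx, hxp, hx2]; abel
    have hz : φ (p + x) (1 - (p + x)) = 0 :=
      h0 _ _ (by rw [mul_sub, mul_one, he, sub_self]) (by rw [sub_mul, one_mul, he, sub_self])
    have hxx : φ x x = 0 := h0 _ _ hx2 hx2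
    have hs : φ p x = φ x p := hsym p x
    simp only [map_add, map_sub, LinearMap.add_apply, LinearMap.sub_apply] at hz hpq
    linear_combination (norm := module) hz - hpq + hxx + hs
  · intro x hxp hpx
    exact h0 _ _ hxp hpx

end Aux

/-- Proposition 3.7 (algebraic case): for a unital complex algebra spanned by its
idempotents and a bilinear map `φ`, the following are equivalent: (i) `φ` is symmetric and
vanishes on pairs with `ab = ba = 0`; (ii) `φ` vanishes on pairs with zero Jordan product;
(iii) `φ(a,b) = T(a∘b)` for some linear map `T`. -/
theorem symmetric_condition_G_tfae_of_span_idempotents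
    {A X : Type*} [Ring A] [Algebra ℂ A] [AddCommGroup X] [Module ℂ X]
    (hA : Submodule.span ℂ {p : A | p * p = p} = ⊤)
    (φ : A →ₗ[ℂ] A →ₗ[ℂ] X) :
    List.TFAE
      [ (∀ a b : A, φ a b = φ b a) ∧ (∀ a b : A, a * b = 0 → b * a = 0 → φ a b = 0),
        ∀ a b : A, a * b + b * a = 0 → φ a b = 0,
        ∃ T : A →ₗ[ℂ] X, ∀ a b : A, φ a b = T (a * b + b * a) ] := by
  tfae_have 1 → 3
  | ⟨hsym, h0⟩ => key_ext φ hA (key_of_one φ hsym h0)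
  tfae_have 2 → 3
  | h => key_ext φ hA (key_of_two φ h)
  tfae_have 3 → 1
  | ⟨T, hT⟩ => by
    constructor
    · intro a b
      rw [hT a b, hT b a, add_comm]
    · intro a b hab hba
      rw [hT a b, hab, hba, add_zero, map_zero]
  tfae_have 3 → 2
  | ⟨T, hT⟩ => by
    intro a b hab
    rw [hT a b, hab, map_zero]
  tfae_finish
end

section
/- Let A be a unital complex Banach algebra equal to the norm closure of Im(A), let X be a complex Banach space, and let φ : A × A → X be a continuous ℂ-bilinear map. The following conditions are equivalent: (i) φ is symmetric (φ(a,b) = φ(b,a) for all a, b ∈ A) and φ(a,b) = 0 whenever ab = ba = 0; (ii) φ(a,b) = 0 whenever a∘b = 0; (iii) there exists a continuous ℂ-linear map T : A → X such that φ(a,b) = T(a∘b) for all a, b ∈ A. -/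
section ZJPDAux

variable {A X : Type*} [NormedRing A] [NormedAlgebra ℂ A] [CompleteSpace A]
    [NormedAddCommGroup X] [NormedSpace ℂ X] [CompleteSpace X]

private lemma aux_dense
    (hA : closure ((Submodule.span ℂ {p : A | p * p = p} : Submodule ℂ A) : Set A) = Set.univ)
    (g : A →L[ℂ] X) (hg : ∀ p : A, p * p = p → g p = 0) : ∀ x : A, g x = 0 := by
  intro x
  have hx : x ∈ closure ((Submodule.span ℂ {p : A | p * p = p} : Submodule ℂ A) : Set A) := by
    rw [hA]; trivial
  have hsub : ((Submodule.span ℂ {p : A | p * p = p} : Submodule ℂ A) : Set A)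
      ⊆ {y : A | g y = 0} := by
    intro y hy
    simp only [SetLike.mem_coe] at hy
    induction hy using Submodule.span_induction with
    | mem z hz => exact hg z hz
    | zero => simp
    | add z w _ _ ihz ihw =>
        simp only [Set.mem_setOf_eq] at ihz ihw ⊢
        rw [map_add, ihz, ihw, add_zero]
    | smul c z _ ih =>
        simp only [Set.mem_setOf_eq] at ih ⊢
        rw [map_smul, ih, smul_zero]
  have hclosed : IsClosed {y : A | g y = 0} := isClosed_eq g.continuous continuous_const
  exact closure_minimal hsub hclosed hx

/-- From the key identity on pairs of idempotents, get it everywhere, by density. -/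
private lemma aux_conclude
    (hA : closure ((Submodule.span ℂ {p : A | p * p = p} : Submodule ℂ A) : Set A) = Set.univ)
    (φ : A →L[ℂ] A →L[ℂ] X) (T : A →L[ℂ] X)
    (key : ∀ p : A, p * p = p → ∀ r : A, r * r = r → φ r p = T (r * p + p * r)) :
    ∀ a b : A, φ a b = T (a * b + b * a) := by
  have step1 : ∀ p : A, p * p = p → ∀ x : A, φ x p = T (x * p + p * x) := by
    intro p hp
    have h0 := aux_dense hA
      (φ.flip p - T.comp ((ContinuousLinearMap.mul ℂ A).flip p + ContinuousLinearMap.mul ℂ A p))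
      (by
        intro r hr
        simp only [ContinuousLinearMap.sub_apply, ContinuousLinearMap.flip_apply,
          ContinuousLinearMap.comp_apply, ContinuousLinearMap.add_apply,
          ContinuousLinearMap.mul_apply']
        rw [key p hp r hr, sub_self])
    intro x
    have hx := h0 x
    simp only [ContinuousLinearMap.sub_apply, ContinuousLinearMap.flip_apply,
      ContinuousLinearMap.comp_apply, ContinuousLinearMap.add_apply,
      ContinuousLinearMap.mul_apply'] at hx
    exact sub_eq_zero.mp hx
  intro a b
  have h0 := aux_dense hA
    (φ a - T.comp (ContinuousLinearMap.mul ℂ A a + (ContinuousLinearMap.mul ℂ A).flip a))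
    (by
      intro p hp
      simp only [ContinuousLinearMap.sub_apply, ContinuousLinearMap.flip_apply,
        ContinuousLinearMap.comp_apply, ContinuousLinearMap.add_apply,
        ContinuousLinearMap.mul_apply']
      rw [step1 p hp a, sub_self])
  have hb := h0 b
  simp only [ContinuousLinearMap.sub_apply, ContinuousLinearMap.flip_apply,
    ContinuousLinearMap.comp_apply, ContinuousLinearMap.add_apply,
    ContinuousLinearMap.mul_apply'] at hb
  exact sub_eq_zero.mp hb

private lemma key_two (φ : A →L[ℂ] A →L[ℂ] X)
    (H2 : ∀ a b : A, a * b + b * a = 0 → φ a b = 0)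
    (T : A →L[ℂ] X) (hT : ∀ x : A, T x = (2⁻¹ : ℂ) • φ x 1)
    (p : A) (hp : p * p = p) (r : A) (hr : r * r = r) :
    φ r p = T (r * p + p * r) := by
  have hpq : p * (1 - p) = 0 := by rw [mul_sub, mul_one, hp, sub_self]
  have hqp : (1 - p) * p = 0 := by rw [sub_mul, one_mul, hp, sub_self]
  have hqq : (1 - p) * (1 - p) = 1 - p := by rw [sub_mul, one_mul, hpq, sub_zero]
  have hTdouble : ∀ x : A, T (x + x) = φ x 1 := by
    intro x
    rw [hT, map_add, ContinuousLinearMap.add_apply, ← two_smul ℂ (φ x 1), smul_smul]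
    norm_num
  -- corner w = p*r*p
  have hwp : (p * r * p) * p = p * r * p := by rw [mul_assoc, hp]
  have hpw : p * (p * r * p) = p * r * p := by rw [← mul_assoc, ← mul_assoc, hp]
  have hw1 : (p * r * p) * (1 - p) = 0 := by rw [mul_assoc, hpq, mul_zero]
  have hw2 : (1 - p) * (p * r * p) = 0 := by rw [← mul_assoc, ← mul_assoc, hqp, zero_mul, zero_mul]
  have hφw : φ (p * r * p) (1 - p) = 0 := H2 _ _ (by rw [hw1, hw2, add_zero])
  have e1 : φ (p * r * p) p = T ((p * r * p) * p + p * (p * r * p)) := by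
    rw [hwp, hpw, hTdouble]
    have hps : (1 : A) - (1 - p) = p := sub_sub_cancel 1 p
    calc φ (p * r * p) p = φ (p * r * p) (1 - (1 - p)) := by rw [hps]
      _ = φ (p * r * p) 1 - φ (p * r * p) (1 - p) := map_sub _ _ _
      _ = φ (p * r * p) 1 := by rw [hφw, sub_zero]
  -- corner z = (1-p)*r*(1-p)
  have hz1 : ((1 - p) * r * (1 - p)) * p = 0 := by rw [mul_assoc, hqp, mul_zero]
  have hz2 : p * ((1 - p) * r * (1 - p)) = 0 := by
    rw [← mul_assoc, ← mul_assoc, hpq, zero_mul, zero_mul]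
  have e4 : φ ((1 - p) * r * (1 - p)) p = T (((1 - p) * r * (1 - p)) * p + p * ((1 - p) * r * (1 - p))) := by
    rw [hz1, hz2, add_zero, map_zero]
    exact H2 _ _ (by rw [hz1, hz2, add_zero])
  -- corner u = p*r*(1-p)
  have hu1 : (p * r * (1 - p)) * p = 0 := by rw [mul_assoc, hqp, mul_zero]
  have hu2 : (p * r * (1 - p)) * (1 - p) = p * r * (1 - p) := by rw [mul_assoc, hqq]
  have hu3 : p * (p * r * (1 - p)) = p * r * (1 - p) := by rw [← mul_assoc, ← mul_assoc, hp]
  have hu4 : (1 - p) * (p * r * (1 - p)) = 0 := by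
    rw [← mul_assoc, ← mul_assoc, hqp, zero_mul, zero_mul]
  have e2 : φ (p * r * (1 - p)) p = T ((p * r * (1 - p)) * p + p * (p * r * (1 - p))) := by
    rw [hu1, hu3, zero_add, hT]
    have hsub : φ (p * r * (1 - p)) p - φ (p * r * (1 - p)) (1 - p) = 0 := by
      rw [← map_sub]
      refine H2 _ _ ?_
      rw [mul_sub (p * r * (1 - p)) p (1 - p), sub_mul p (1 - p) (p * r * (1 - p)),
        hu1, hu2, hu3, hu4]
      abel
    have hadd : φ (p * r * (1 - p)) p + φ (p * r * (1 - p)) (1 - p) = φ (p * r * (1 - p)) 1 := by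
      rw [← map_add]
      congr 1
      abel
    have heq := sub_eq_zero.mp hsub
    have h2x : φ (p * r * (1 - p)) p + φ (p * r * (1 - p)) p = φ (p * r * (1 - p)) 1 := by
      nth_rewrite 2 [heq]
      exact hadd
    calc φ (p * r * (1 - p)) p
        = (2⁻¹ : ℂ) • (φ (p * r * (1 - p)) p + φ (p * r * (1 - p)) p) := by
          rw [← two_smul ℂ, smul_smul]; norm_num
      _ = (2⁻¹ : ℂ) • φ (p * r * (1 - p)) 1 := by rw [h2x]
  -- corner v = (1-p)*r*p
  have hv1 : ((1 - p) * r * p) * p = (1 - p) * r * p := by rw [mul_assoc, hp]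
  have hv2 : ((1 - p) * r * p) * (1 - p) = 0 := by rw [mul_assoc, hpq, mul_zero]
  have hv3 : p * ((1 - p) * r * p) = 0 := by rw [← mul_assoc, ← mul_assoc, hpq, zero_mul, zero_mul]
  have hv4 : (1 - p) * ((1 - p) * r * p) = (1 - p) * r * p := by
    rw [← mul_assoc, ← mul_assoc, hqq]
  have e3 : φ ((1 - p) * r * p) p = T (((1 - p) * r * p) * p + p * ((1 - p) * r * p)) := by
    rw [hv1, hv3, add_zero, hT]
    have hsub : φ ((1 - p) * r * p) p - φ ((1 - p) * r * p) (1 - p) = 0 := by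
      rw [← map_sub]
      refine H2 _ _ ?_
      rw [mul_sub ((1 - p) * r * p) p (1 - p), sub_mul p (1 - p) ((1 - p) * r * p),
        hv1, hv2, hv3, hv4]
      abel
    have hadd : φ ((1 - p) * r * p) p + φ ((1 - p) * r * p) (1 - p) = φ ((1 - p) * r * p) 1 := by
      rw [← map_add]
      congr 1
      abel
    have heq := sub_eq_zero.mp hsub
    have h2x : φ ((1 - p) * r * p) p + φ ((1 - p) * r * p) p = φ ((1 - p) * r * p) 1 := by
      nth_rewrite 2 [heq]
      exact hadd
    calc φ ((1 - p) * r * p) p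
        = (2⁻¹ : ℂ) • (φ ((1 - p) * r * p) p + φ ((1 - p) * r * p) p) := by
          rw [← two_smul ℂ, smul_smul]; norm_num
      _ = (2⁻¹ : ℂ) • φ ((1 - p) * r * p) 1 := by rw [h2x]
  -- assemble
  have hdecomp : p * r * p + (p * r * (1 - p) + ((1 - p) * r * p + (1 - p) * r * (1 - p))) = r := by
    noncomm_ring
  calc φ r p
      = φ (p * r * p) p + (φ (p * r * (1 - p)) p + (φ ((1 - p) * r * p) p
          + φ ((1 - p) * r * (1 - p)) p)) := by
        conv_lhs => rw [← hdecomp]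
        simp only [map_add, ContinuousLinearMap.add_apply]
    _ = T ((p * r * p) * p + p * (p * r * p)) + (T ((p * r * (1 - p)) * p + p * (p * r * (1 - p)))
          + (T (((1 - p) * r * p) * p + p * ((1 - p) * r * p))
          + T (((1 - p) * r * (1 - p)) * p + p * ((1 - p) * r * (1 - p))))) := by
        rw [e1, e2, e3, e4]
    _ = T (r * p + p * r) := by
        rw [← map_add, ← map_add, ← map_add]
        congr 1
        conv_rhs => rw [← hdecomp]
        noncomm_ring

private lemma key_one (φ : A →L[ℂ] A →L[ℂ] X)
    (Hsym : ∀ a b : A, φ a b = φ b a)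
    (H0 : ∀ a b : A, a * b = 0 → b * a = 0 → φ a b = 0)
    (T : A →L[ℂ] X) (hT : ∀ x : A, T x = (2⁻¹ : ℂ) • φ x 1)
    (p : A) (hp : p * p = p) (r : A) (hr : r * r = r) :
    φ r p = T (r * p + p * r) := by
  have hpq : p * (1 - p) = 0 := by rw [mul_sub, mul_one, hp, sub_self]
  have hqp : (1 - p) * p = 0 := by rw [sub_mul, one_mul, hp, sub_self]
  have hqq : (1 - p) * (1 - p) = 1 - p := by rw [sub_mul, one_mul, hpq, sub_zero]
  have hTdouble : ∀ x : A, T (x + x) = φ x 1 := by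
    intro x
    rw [hT, map_add, ContinuousLinearMap.add_apply, ← two_smul ℂ (φ x 1), smul_smul]
    norm_num
  have hφpq : φ p (1 - p) = 0 := H0 _ _ hpq hqp
  -- corner w = p*r*p
  have hwp : (p * r * p) * p = p * r * p := by rw [mul_assoc, hp]
  have hpw : p * (p * r * p) = p * r * p := by rw [← mul_assoc, ← mul_assoc, hp]
  have hw1 : (p * r * p) * (1 - p) = 0 := by rw [mul_assoc, hpq, mul_zero]
  have hw2 : (1 - p) * (p * r * p) = 0 := by rw [← mul_assoc, ← mul_assoc, hqp, zero_mul, zero_mul]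
  have hφw : φ (p * r * p) (1 - p) = 0 := H0 _ _ hw1 hw2
  have e1 : φ (p * r * p) p = T ((p * r * p) * p + p * (p * r * p)) := by
    rw [hwp, hpw, hTdouble]
    have hps : (1 : A) - (1 - p) = p := sub_sub_cancel 1 p
    calc φ (p * r * p) p = φ (p * r * p) (1 - (1 - p)) := by rw [hps]
      _ = φ (p * r * p) 1 - φ (p * r * p) (1 - p) := map_sub _ _ _
      _ = φ (p * r * p) 1 := by rw [hφw, sub_zero]
  -- corner z = (1-p)*r*(1-p)
  have hz1 : ((1 - p) * r * (1 - p)) * p = 0 := by rw [mul_assoc, hqp, mul_zero]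
  have hz2 : p * ((1 - p) * r * (1 - p)) = 0 := by
    rw [← mul_assoc, ← mul_assoc, hpq, zero_mul, zero_mul]
  have e4 : φ ((1 - p) * r * (1 - p)) p
      = T (((1 - p) * r * (1 - p)) * p + p * ((1 - p) * r * (1 - p))) := by
    rw [hz1, hz2, add_zero, map_zero]
    exact H0 _ _ hz1 hz2
  -- corner u = p*r*(1-p)
  have hu1 : (p * r * (1 - p)) * p = 0 := by rw [mul_assoc, hqp, mul_zero]
  have hu2 : (p * r * (1 - p)) * (1 - p) = p * r * (1 - p) := by rw [mul_assoc, hqq]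
  have hu3 : p * (p * r * (1 - p)) = p * r * (1 - p) := by rw [← mul_assoc, ← mul_assoc, hp]
  have hu4 : (1 - p) * (p * r * (1 - p)) = 0 := by
    rw [← mul_assoc, ← mul_assoc, hqp, zero_mul, zero_mul]
  have huu : (p * r * (1 - p)) * (p * r * (1 - p)) = 0 := by
    rw [← mul_assoc, ← mul_assoc, hu1, zero_mul, zero_mul]
  have e2 : φ (p * r * (1 - p)) p = T ((p * r * (1 - p)) * p + p * (p * r * (1 - p))) := by
    rw [hu1, hu3, zero_add, hT]
    -- idempotent pair e = p + u, f = (1-p) - u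
    have hef : (p + p * r * (1 - p)) * ((1 - p) - p * r * (1 - p)) = 0 := by
      rw [add_mul, mul_sub p (1 - p) (p * r * (1 - p)),
        mul_sub (p * r * (1 - p)) (1 - p) (p * r * (1 - p)), hpq, hu3, hu2, huu]
      abel
    have hfe : ((1 - p) - p * r * (1 - p)) * (p + p * r * (1 - p)) = 0 := by
      rw [sub_mul (1 - p) (p * r * (1 - p)) (p + p * r * (1 - p)),
        mul_add (1 - p) p (p * r * (1 - p)), mul_add (p * r * (1 - p)) p (p * r * (1 - p)),
        hqp, hu4, hu1, huu]
      abel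
    have hφef := H0 _ _ hef hfe
    rw [map_add, ContinuousLinearMap.add_apply,
      map_sub (φ p) (1 - p) (p * r * (1 - p)),
      map_sub (φ (p * r * (1 - p))) (1 - p) (p * r * (1 - p)), hφpq,
      H0 _ _ huu huu, zero_sub, sub_zero] at hφef
    have heq : φ (p * r * (1 - p)) (1 - p) = φ (p * r * (1 - p)) p := by
      rw [← neg_add_eq_zero.mp hφef]
      exact Hsym p _
    have hadd : φ (p * r * (1 - p)) p + φ (p * r * (1 - p)) (1 - p) = φ (p * r * (1 - p)) 1 := by
      rw [← map_add]
      congr 1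
      abel
    rw [heq] at hadd
    calc φ (p * r * (1 - p)) p
        = (2⁻¹ : ℂ) • (φ (p * r * (1 - p)) p + φ (p * r * (1 - p)) p) := by
          rw [← two_smul ℂ, smul_smul]; norm_num
      _ = (2⁻¹ : ℂ) • φ (p * r * (1 - p)) 1 := by rw [hadd]
  -- corner v = (1-p)*r*p
  have hv1 : ((1 - p) * r * p) * p = (1 - p) * r * p := by rw [mul_assoc, hp]
  have hv2 : ((1 - p) * r * p) * (1 - p) = 0 := by rw [mul_assoc, hpq, mul_zero]
  have hv3 : p * ((1 - p) * r * p) = 0 := by rw [← mul_assoc, ← mul_assoc, hpq, zero_mul, zero_mul]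
  have hv4 : (1 - p) * ((1 - p) * r * p) = (1 - p) * r * p := by
    rw [← mul_assoc, ← mul_assoc, hqq]
  have hvv : ((1 - p) * r * p) * ((1 - p) * r * p) = 0 := by
    rw [← mul_assoc, ← mul_assoc, hv2, zero_mul, zero_mul]
  have e3 : φ ((1 - p) * r * p) p = T (((1 - p) * r * p) * p + p * ((1 - p) * r * p)) := by
    rw [hv1, hv3, add_zero, hT]
    have hef : (p + (1 - p) * r * p) * ((1 - p) - (1 - p) * r * p) = 0 := by
      rw [add_mul, mul_sub p (1 - p) ((1 - p) * r * p),
        mul_sub ((1 - p) * r * p) (1 - p) ((1 - p) * r * p), hpq, hv3, hv2, hvv]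
      abel
    have hfe : ((1 - p) - (1 - p) * r * p) * (p + (1 - p) * r * p) = 0 := by
      rw [sub_mul (1 - p) ((1 - p) * r * p) (p + (1 - p) * r * p),
        mul_add (1 - p) p ((1 - p) * r * p), mul_add ((1 - p) * r * p) p ((1 - p) * r * p),
        hqp, hv4, hv1, hvv]
      abel
    have hφef := H0 _ _ hef hfe
    rw [map_add, ContinuousLinearMap.add_apply,
      map_sub (φ p) (1 - p) ((1 - p) * r * p),
      map_sub (φ ((1 - p) * r * p)) (1 - p) ((1 - p) * r * p), hφpq,
      H0 _ _ hvv hvv, zero_sub, sub_zero] at hφef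
    have heq : φ ((1 - p) * r * p) (1 - p) = φ ((1 - p) * r * p) p := by
      rw [← neg_add_eq_zero.mp hφef]
      exact Hsym p _
    have hadd : φ ((1 - p) * r * p) p + φ ((1 - p) * r * p) (1 - p) = φ ((1 - p) * r * p) 1 := by
      rw [← map_add]
      congr 1
      abel
    rw [heq] at hadd
    calc φ ((1 - p) * r * p) p
        = (2⁻¹ : ℂ) • (φ ((1 - p) * r * p) p + φ ((1 - p) * r * p) p) := by
          rw [← two_smul ℂ, smul_smul]; norm_num
      _ = (2⁻¹ : ℂ) • φ ((1 - p) * r * p) 1 := by rw [hadd]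
  -- assemble
  have hdecomp : p * r * p + (p * r * (1 - p) + ((1 - p) * r * p + (1 - p) * r * (1 - p))) = r := by
    noncomm_ring
  calc φ r p
      = φ (p * r * p) p + (φ (p * r * (1 - p)) p + (φ ((1 - p) * r * p) p
          + φ ((1 - p) * r * (1 - p)) p)) := by
        conv_lhs => rw [← hdecomp]
        simp only [map_add, ContinuousLinearMap.add_apply]
    _ = T ((p * r * p) * p + p * (p * r * p)) + (T ((p * r * (1 - p)) * p + p * (p * r * (1 - p)))
          + (T (((1 - p) * r * p) * p + p * ((1 - p) * r * p))
          + T (((1 - p) * r * (1 - p)) * p + p * ((1 - p) * r * (1 - p))))) := by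
        rw [e1, e2, e3, e4]
    _ = T (r * p + p * r) := by
        rw [← map_add, ← map_add, ← map_add]
        congr 1
        conv_rhs => rw [← hdecomp]
        noncomm_ring

end ZJPDAux

/-- Proposition 3.7 (Banach case): for a unital complex Banach algebra equal to the norm
closure of the span of its idempotents and a continuous bilinear map `φ`, the following
are equivalent: (i) `φ` is symmetric and vanishes on pairs with `ab = ba = 0`;
(ii) `φ` vanishes on pairs with zero Jordan product;
(iii) `φ(a,b) = T(a∘b)` for some continuous linear map `T`. -/
theorem symmetric_condition_G_tfae_of_closure_span_idempotents
    {A X : Type*} [NormedRing A] [NormedAlgebra ℂ A] [CompleteSpace A]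
    [NormedAddCommGroup X] [NormedSpace ℂ X] [CompleteSpace X]
    (hA : closure ((Submodule.span ℂ {p : A | p * p = p} : Submodule ℂ A) : Set A) = Set.univ)
    (φ : A →L[ℂ] A →L[ℂ] X) :
    List.TFAE
      [ (∀ a b : A, φ a b = φ b a) ∧ (∀ a b : A, a * b = 0 → b * a = 0 → φ a b = 0),
        ∀ a b : A, a * b + b * a = 0 → φ a b = 0,
        ∃ T : A →L[ℂ] X, ∀ a b : A, φ a b = T (a * b + b * a) ] := by
  have hTdef : ∀ x : A, ((2⁻¹ : ℂ) • φ.flip 1) x = (2⁻¹ : ℂ) • φ x 1 := by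
    intro x
    simp only [ContinuousLinearMap.smul_apply, ContinuousLinearMap.flip_apply]
  tfae_have 1 → 3
  · rintro ⟨Hsym, H0⟩
    exact ⟨(2⁻¹ : ℂ) • φ.flip 1,
      aux_conclude hA φ _ (fun p hp r hr => key_one φ Hsym H0 _ hTdef p hp r hr)⟩
  tfae_have 2 → 3
  · intro H2
    exact ⟨(2⁻¹ : ℂ) • φ.flip 1,
      aux_conclude hA φ _ (fun p hp r hr => key_two φ H2 _ hTdef p hp r hr)⟩
  tfae_have 3 → 1
  · rintro ⟨T, hT⟩
    constructor
    · intro a b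
      rw [hT a b, hT b a, add_comm]
    · intro a b hab hba
      rw [hT, hab, hba, add_zero, map_zero]
  tfae_have 3 → 2
  · rintro ⟨T, hT⟩ a b h
    rw [hT, h, map_zero]
  tfae_finish
end

section
/- Let A be a unital associative algebra over ℂ, let M be a unital A-bimodule, and let J be a two-sided ideal of A with J ⊆ Im(A) such that the only element m ∈ M satisfying xm = mx = 0 for all x ∈ J is m = 0. If D : A → M is a ℂ-linear map such that aD(b) + D(a)b = 0 whenever a, b ∈ A satisfy ab = 0, then D(ab) = aD(b) + D(a)b − aD(1)b for all a, b ∈ A (D is a generalized derivation), and aD(1) = D(1)a for all a ∈ A. -/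
open MulOpposite in
/-- Theorem 4.1 (algebraic case): if `J` is a two-sided ideal of `A` contained in the span
of the idempotents of `A` such that no nonzero `m ∈ M` satisfies `xm = mx = 0` for all
`x ∈ J`, then every linear map `D : A → M` with `aD(b) + D(a)b = 0` whenever `ab = 0` is a
generalized derivation and `D(1)` commutes with `A`.  Here the left action of `A` on the
bimodule `M` is `a • m` and the right action is `op b • m`. -/
theorem generalized_derivation_of_zero_products
    {A M : Type*} [Ring A] [Algebra ℂ A]
    [AddCommGroup M] [Module ℂ M]
    [Module A M] [Module Aᵐᵒᵖ M] [SMulCommClass A Aᵐᵒᵖ M]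
    [IsScalarTower ℂ A M] [IsScalarTower ℂ Aᵐᵒᵖ M]
    (J : TwoSidedIdeal A)
    (hJ : ∀ x ∈ J, x ∈ Submodule.span ℂ {p : A | p * p = p})
    (hM : ∀ m : M, (∀ x ∈ J, x • m = 0 ∧ op x • m = 0) → m = 0)
    (D : A →ₗ[ℂ] M)
    (hD : ∀ a b : A, a * b = 0 → a • D b + op b • D a = 0) :
    (∀ a b : A, D (a * b) = a • D b + op b • D a - op b • (a • D 1)) ∧
    (∀ a : A, a • D 1 = op a • D 1) := by
  -- commute an `Aᵐᵒᵖ`-scalar inward past an `A`-scalar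
  have sc : ∀ (y : A) (z : Aᵐᵒᵖ) (m : M), z • y • m = y • z • m :=
    fun y z m => (smul_comm y z m).symm
  have scC : ∀ (c : ℂ) (y : A) (m : M), y • c • m = c • y • m :=
    fun c y m => smul_comm y c m
  have scC' : ∀ (c : ℂ) (z : Aᵐᵒᵖ) (m : M), z • c • m = c • z • m :=
    fun c z m => smul_comm z c m
  -- Step 1: idempotents commute with D 1
  have hId : ∀ p : A, p * p = p → p • D 1 = op p • D 1 := by
    intro p hp
    have e1 := hD p (1 - p) (by rw [mul_sub, mul_one, hp, sub_self])
    have e2 := hD (1 - p) p (by rw [sub_mul, one_mul, hp, sub_self])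
    simp only [map_sub, smul_sub, op_sub, op_one, sub_smul, one_smul] at e1 e2
    have e12 := congrArg₂ (· - ·) e1 e2
    simp only [sub_zero] at e12
    rw [← sub_eq_zero, ← e12]
    abel
  have hcomm : ∀ x ∈ J, x • D 1 = op x • D 1 := by
    intro x hx
    refine Submodule.span_induction (fun p hp => hId p hp) ?_ ?_ ?_ (hJ x hx)
    · simp
    · intro u v _ _ hu hv
      simp only [add_smul, op_add]
      rw [hu, hv]
    · intro c u _ hu
      simp only [op_smul, smul_assoc]
      rw [hu]
  -- Step 2: right generalized-derivation formula for idempotents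
  have hRId : ∀ p : A, p * p = p →
      ∀ a : A, D (a * p) = a • D p + op p • D a - op p • (a • D 1) := by
    intro p hp a
    have e1 := hD (a - a * p) p (by rw [sub_mul, mul_assoc, hp, sub_self])
    have e2 := hD (a * p) (1 - p) (by rw [mul_sub, mul_one, mul_assoc, hp, sub_self])
    simp only [map_sub, smul_sub, op_sub, op_one, sub_smul, one_smul] at e1 e2
    have e12 := congrArg₂ (· - ·) e2 e1
    simp only [sub_zero] at e12
    have hp1 : (a * p) • D 1 = op p • (a • D 1) := by
      rw [mul_smul, hId p hp, smul_comm]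
    rw [← sub_eq_zero, ← e12, hp1]
    abel
  -- Step 3: left generalized-derivation formula for idempotents
  have hLId : ∀ p : A, p * p = p →
      ∀ a : A, D (p * a) = p • D a + op a • D p - op a • (p • D 1) := by
    intro p hp a
    have e1 := hD p (a - p * a) (by rw [mul_sub, ← mul_assoc, hp, sub_self])
    have e2 := hD (1 - p) (p * a) (by rw [sub_mul, one_mul, ← mul_assoc, hp, sub_self])
    simp only [map_sub, smul_sub, op_sub, op_one, sub_smul, one_smul] at e1 e2
    have e12 := congrArg₂ (· - ·) e2 e1
    simp only [sub_zero] at e12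
    have hp1 : op (p * a) • D 1 = op a • (p • D 1) := by
      rw [op_mul, mul_smul, ← hId p hp]
    rw [← sub_eq_zero, ← e12, hp1]
    abel
  -- Step 4: extend both formulas to J
  have hR : ∀ x ∈ J, ∀ a : A,
      D (a * x) = a • D x + op x • D a - op x • (a • D 1) := by
    intro x hx
    refine Submodule.span_induction (fun p hp => hRId p hp) ?_ ?_ ?_ (hJ x hx)
    · intro a; simp
    · intro u v _ _ hu hv a
      simp only [mul_add, map_add, op_add, add_smul, smul_add, hu a, hv a]
      abel
    · intro c u _ hu a
      simp only [mul_smul_comm, map_smul, op_smul, smul_assoc, hu a, smul_add,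
        smul_sub, scC, scC']
  have hL : ∀ x ∈ J, ∀ a : A,
      D (x * a) = x • D a + op a • D x - op a • (x • D 1) := by
    intro x hx
    refine Submodule.span_induction (fun p hp => hLId p hp) ?_ ?_ ?_ (hJ x hx)
    · intro a; simp
    · intro u v _ _ hu hv a
      simp only [add_mul, map_add, op_add, add_smul, smul_add, hu a, hv a]
      abel
    · intro c u _ hu a
      simp only [smul_mul_assoc, map_smul, op_smul, smul_assoc, hu a, smul_add,
        smul_sub, scC, scC']
  constructor
  · -- generalized derivation identity
    intro a b
    have key : D (a * b) - (a • D b + op b • D a - op b • (a • D 1)) = 0 := by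
      apply hM
      intro x hx
      constructor
      · -- left annihilation
        have e1 := hL x hx (a * b)
        have e2 := hL (x * a) (J.mul_mem_right x a hx) b
        rw [hL x hx a] at e2
        rw [mul_assoc] at e2
        have e := e1.symm.trans e2
        rw [← sub_eq_zero.mpr e]
        simp only [smul_sub, smul_add, mul_smul, op_mul, sc]
        abel
      · -- right annihilation
        have e1 := hR x hx (a * b)
        have e2 := hR (b * x) (J.mul_mem_left b x hx) a
        rw [hR x hx b] at e2
        rw [← mul_assoc] at e2
        have e := e1.symm.trans e2
        rw [← sub_eq_zero.mpr e]
        simp only [smul_sub, smul_add, mul_smul, op_mul, sc]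
        abel
    rw [← sub_eq_zero]
    exact key
  · -- D 1 commutes with A
    intro a
    have key : a • D 1 - op a • D 1 = 0 := by
      apply hM
      intro x hx
      constructor
      · rw [smul_sub, ← mul_smul, hcomm (x * a) (J.mul_mem_right x a hx), op_mul,
          mul_smul, ← hcomm x hx, smul_comm x (op a) (D 1), sub_self]
      · rw [smul_sub, sc a (op x) (D 1), ← hcomm x hx, ← mul_smul a x (D 1),
          hcomm (a * x) (J.mul_mem_left a x hx), ← mul_smul (op x) (op a) (D 1),
          ← op_mul, sub_self]
    rw [← sub_eq_zero]
    exact key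
end

section
/- Let A be a unital complex Banach algebra, let M be a unital Banach A-bimodule, and let J be a two-sided ideal of A contained in the norm closure of Im(A) such that the only element m ∈ M satisfying xm = mx = 0 for all x ∈ J is m = 0. If D : A → M is a continuous ℂ-linear map such that aD(b) + D(a)b = 0 whenever a, b ∈ A satisfy ab = 0, then D(ab) = aD(b) + D(a)b − aD(1)b for all a, b ∈ A (D is a generalized derivation), and aD(1) = D(1)a for all a ∈ A. -/
open MulOpposite in
/-- Theorem 4.1 (Banach case): let `A` be a unital complex Banach algebra and `M` a unital
Banach `A`-bimodule (the left action `a • m` and right action `op b • m` are jointly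
continuous).  If `J` is a two-sided ideal of `A` contained in the norm closure of the span
of the idempotents of `A` such that no nonzero `m ∈ M` satisfies `xm = mx = 0` for all
`x ∈ J`, then every continuous linear map `D : A → M` with `aD(b) + D(a)b = 0` whenever
`ab = 0` is a generalized derivation and `D(1)` commutes with `A`. -/
theorem continuous_generalized_derivation_of_zero_products
    {A M : Type*} [NormedRing A] [NormedAlgebra ℂ A] [CompleteSpace A]
    [NormedAddCommGroup M] [NormedSpace ℂ M] [CompleteSpace M]
    [Module A M] [Module Aᵐᵒᵖ M] [SMulCommClass A Aᵐᵒᵖ M]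
    [IsScalarTower ℂ A M] [IsScalarTower ℂ Aᵐᵒᵖ M]
    (hcl : Continuous fun p : A × M => p.1 • p.2)
    (hcr : Continuous fun p : A × M => op p.1 • p.2)
    (J : TwoSidedIdeal A)
    (hJ : ∀ x ∈ J,
      x ∈ closure ((Submodule.span ℂ {p : A | p * p = p} : Submodule ℂ A) : Set A))
    (hM : ∀ m : M, (∀ x ∈ J, x • m = 0 ∧ op x • m = 0) → m = 0)
    (D : A →L[ℂ] M)
    (hD : ∀ a b : A, a * b = 0 → a • D b + op b • D a = 0) :
    (∀ a b : A, D (a * b) = a • D b + op b • D a - op b • (a • D 1)) ∧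
    (∀ a : A, a • D 1 = op a • D 1) := by
  set S : Set A := ((Submodule.span ℂ {p : A | p * p = p} : Submodule ℂ A) : Set A) with hS
  -- Key identity: for x in the closure of the span of idempotents,
  -- (a*x) • D b + op b • D (a*x) = a • D (x*b) + op (x*b) • D a
  have key : ∀ a b : A, ∀ x ∈ closure S,
      (a*x) • D b + op b • D (a*x) = a • D (x*b) + op (x*b) • D a := by
    intro a b x hx
    have hcA : ∀ (c : ℂ) (y : A) (m : M), y • c • m = c • y • m := by
      intro c y m
      calc y • c • m = y • ((c • (1:A)) • m) := by rw [smul_assoc, one_smul]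
      _ = (y * (c • (1:A))) • m := by rw [mul_smul]
      _ = (c • y) • m := by rw [mul_smul_comm, mul_one]
      _ = c • y • m := by rw [smul_assoc]
    have hcO : ∀ (c : ℂ) (y : Aᵐᵒᵖ) (m : M), y • c • m = c • y • m := by
      intro c y m
      calc y • c • m = y • ((c • (1:Aᵐᵒᵖ)) • m) := by rw [smul_assoc, one_smul]
      _ = (y * (c • (1:Aᵐᵒᵖ))) • m := by rw [mul_smul]
      _ = (c • y) • m := by rw [mul_smul_comm, mul_one]
      _ = c • y • m := by rw [smul_assoc]
    set f : A → M := fun x =>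
      (a*x) • D b + op b • D (a*x) - a • D (x*b) - op (x*b) • D a with hf
    have hcont : Continuous f := by
      apply Continuous.sub
      apply Continuous.sub
      apply Continuous.add
      · exact hcl.comp (((continuous_mul_left a)).prodMk continuous_const)
      · exact hcr.comp (continuous_const.prodMk
          (D.continuous.comp (continuous_mul_left a)))
      · exact hcl.comp (continuous_const.prodMk
          (D.continuous.comp (continuous_mul_right b)))
      · exact hcr.comp ((continuous_mul_right b).prodMk continuous_const)
    have hspan : ∀ y ∈ S, f y = 0 := by
      intro y hy
      induction hy using Submodule.span_induction with
      | mem p hp =>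
        -- p is an idempotent
        have hpp : p * (1 - p) = 0 := by
          rw [mul_sub, mul_one, hp, sub_self]
        have hpp' : (1 - p) * p = 0 := by
          rw [sub_mul, one_mul, hp, sub_self]
        have h1 : (a*p) • D ((1-p)*b) + op ((1-p)*b) • D (a*p) = 0 := by
          apply hD
          calc (a*p) * ((1-p)*b) = a * (p * (1-p)) * b := by noncomm_ring
          _ = 0 := by rw [hpp, mul_zero, zero_mul]
        have h2 : (a*(1-p)) • D (p*b) + op (p*b) • D (a*(1-p)) = 0 := by
          apply hD
          calc (a*(1-p)) * (p*b) = a * ((1-p) * p) * b := by noncomm_ring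
          _ = 0 := by rw [hpp', mul_zero, zero_mul]
        simp only [sub_mul, mul_sub, one_mul, mul_one, map_sub, op_sub,
          smul_sub, sub_smul] at h1 h2
        simp only [hf, hf]
        linear_combination (norm := abel) h1 - h2
      | zero => simp [hf]
      | add u v hu hv ihu ihv =>
        have expand : f (u + v) = f u + f v := by
          simp only [hf, mul_add, add_mul, map_add, op_add, smul_add, add_smul]
          abel
        rw [expand, ihu, ihv, add_zero]
      | smul c u hu ihu =>
        have expand : f (c • u) = c • f u := by
          simp only [hf, mul_smul_comm, smul_mul_assoc, map_smul, op_smul,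
            smul_sub, smul_add, smul_assoc, hcA, hcO]
        rw [expand, ihu, smul_zero]
    have hclosed : IsClosed {y : A | f y = 0} := isClosed_eq hcont continuous_const
    have := closure_minimal hspan hclosed hx
    have hx0 : f x = 0 := this
    simp only [hf] at hx0
    linear_combination (norm := abel) hx0
  -- specializations; x in closure S
  have keyA : ∀ b : A, ∀ x ∈ closure S,
      D (x*b) = x • D b + op b • D x - op (x*b) • D 1 := by
    intro b x hx
    have h := key 1 b x hx
    simp only [one_mul, one_smul] at h
    linear_combination (norm := abel) -h
  have keyB : ∀ a : A, ∀ x ∈ closure S,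
      D (a*x) = a • D x + op x • D a - (a*x) • D 1 := by
    intro a x hx
    have h := key a 1 x hx
    simp only [mul_one, op_one, one_smul] at h
    linear_combination (norm := abel) h
  have keyC : ∀ x ∈ closure S, x • D 1 = op x • D 1 := by
    intro x hx
    have h := key 1 1 x hx
    simp only [one_mul, mul_one, one_smul, op_one] at h
    linear_combination (norm := abel) h
  -- memberships in closure S from J
  have mem : ∀ x ∈ J, x ∈ closure S := hJ
  constructor
  · intro a b
    apply eq_of_sub_eq_zero
    apply hM
    intro x hxJ
    have hx : x ∈ closure S := mem x hxJ
    have hxa : (x*a) ∈ closure S := mem _ (J.mul_mem_right x a hxJ)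
    have hbx : (b*x) ∈ closure S := mem _ (J.mul_mem_left b x hxJ)
    constructor
    · -- x • (D(ab) - a•Db - op b•Da + op b • (a • D1)) = 0
      have e1 : D (x*(a*b)) = x • D (a*b) + op (a*b) • D x - op (x*(a*b)) • D 1 :=
        keyA (a*b) x hx
      have e2 : D ((x*a)*b) = (x*a) • D b + op b • D (x*a) - op ((x*a)*b) • D 1 :=
        keyA b (x*a) hxa
      have e3 : D (x*a) = x • D a + op a • D x - op (x*a) • D 1 := keyA a x hx
      -- combine
      have assoc : x*(a*b) = (x*a)*b := by rw [mul_assoc]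
      rw [assoc] at e1
      -- x • D(ab) = D(xab) - op(ab) • D x + op(xab) • D 1   (from e1)
      -- x • (a • D b) = (x*a) • D b = D(xab) - op b • D(xa) + op(xab) • D1  (e2)
      -- x • (op b • D a) = op b • (x • D a) = op b • (D(xa) - op a • D x + op(xa)•D1)
      -- x • (op b • (a • D1)) = op b • ((x*a) • D1) = op b • (op(xa) • D1) [keyC]
      have c1 : x • (a • D b) = (x*a) • D b := (mul_smul x a (D b)).symm
      have c2 : x • (op b • D a) = op b • (x • D a) := smul_comm x (op b) (D a)
      have c3 : x • (op b • (a • D 1)) = op b • ((x*a) • D 1) := by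
        rw [smul_comm, mul_smul]
      have c4 : (x*a) • D 1 = op (x*a) • D 1 := keyC _ hxa
      have c5 : op b • (op (x*a) • D 1) = op ((x*a)*b) • D 1 := by
        rw [← mul_smul, ← op_mul]
      have c6 : op b • (op a • D x) = op (a*b) • D x := by
        rw [← mul_smul, ← op_mul]
      have c7 : op b • (op (x*a) • D 1) = op ((x*a)*b) • D 1 := c5
      rw [smul_sub, smul_sub, smul_add]
      rw [c1, c2, c3, c4, c5]
      have e3' : op b • D (x*a) =
          op b • (x • D a) + op b • (op a • D x) - op b • (op (x*a) • D 1) := by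
        rw [e3, smul_sub, smul_add]
      rw [c6, c7] at e3'
      -- now pure abelian arithmetic from e1, e2, e3'
      linear_combination (norm := abel) e2 + e3' - e1
    · -- right annihilation
      have e1 : D ((a*b)*x) = (a*b) • D x + op x • D (a*b) - ((a*b)*x) • D 1 :=
        keyB (a*b) x hx
      have e2 : D (a*(b*x)) = a • D (b*x) + op (b*x) • D a - (a*(b*x)) • D 1 :=
        keyB a (b*x) hbx
      have e3 : D (b*x) = b • D x + op x • D b - (b*x) • D 1 := keyB b x hx
      have assoc : (a*b)*x = a*(b*x) := mul_assoc a b x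
      rw [assoc] at e1
      -- op x • (D(ab) - a•Db - op b • D a + op b • (a•D1)) = 0
      have c1 : op x • (a • D b) = a • (op x • D b) := (smul_comm a (op x) (D b)).symm
      have c2 : op x • (op b • D a) = op (b*x) • D a := by
        rw [← mul_smul, ← op_mul]
      have c3 : op x • (op b • (a • D 1)) = op (b*x) • (a • D 1) := by
        rw [← mul_smul, ← op_mul]
      have c4 : (b*x) • D 1 = op (b*x) • D 1 := keyC _ hbx
      have c5 : op (b*x) • (a • D 1) = a • ((b*x) • D 1) := by
        rw [← smul_comm a (op (b*x)) (D 1), ← c4]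
      have c6 : a • ((b*x) • D 1) = (a*(b*x)) • D 1 := (mul_smul a (b*x) (D 1)).symm
      rw [smul_sub, smul_sub, smul_add]
      rw [c1, c2, c3, c5, c6]
      have e2' : a • D (b*x) =
          a • (b • D x) + a • (op x • D b) - a • ((b*x) • D 1) := by
        rw [e3, smul_sub, smul_add]
      have d1 : a • (b • D x) = (a*b) • D x := (mul_smul a b (D x)).symm
      have d2 : a • (op x • D b) = op x • (a • D b) := smul_comm a (op x) (D b)
      have d3 : a • ((b*x) • D 1) = (a*(b*x)) • D 1 := (mul_smul a (b*x) (D 1)).symm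
      rw [d1, d2, d3, c1] at e2'
      linear_combination (norm := abel) e2 + e2' - e1
  · intro a
    apply eq_of_sub_eq_zero
    apply hM
    intro x hxJ
    have hx : x ∈ closure S := mem x hxJ
    have hxa : (x*a) ∈ closure S := mem _ (J.mul_mem_right x a hxJ)
    have hax : (a*x) ∈ closure S := mem _ (J.mul_mem_left a x hxJ)
    constructor
    · rw [smul_sub]
      have c1 : x • (a • D 1) = (x*a) • D 1 := (mul_smul x a (D 1)).symm
      have c2 : x • (op a • D 1) = op a • (x • D 1) := smul_comm x (op a) (D 1)
      have c3 : x • D 1 = op x • D 1 := keyC x hx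
      have c4 : op a • (op x • D 1) = op (x*a) • D 1 := by
        rw [← mul_smul, ← op_mul]
      rw [c1, c2, c3, c4, keyC _ hxa, sub_self]
    · rw [smul_sub]
      have c1 : op x • (a • D 1) = a • (op x • D 1) := (smul_comm a (op x) (D 1)).symm
      have c2 : op x • (op a • D 1) = op (a*x) • D 1 := by
        rw [← mul_smul, ← op_mul]
      have c3 : a • (op x • D 1) = a • (x • D 1) := by rw [keyC x hx]
      have c4 : a • (x • D 1) = (a*x) • D 1 := (mul_smul a x (D 1)).symm
      rw [c1, c2, c3, c4, keyC _ hax, sub_self]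
end

section
/- Let A be a unital associative algebra over ℂ, let M be a unital A-bimodule, and let J be a two-sided ideal of A. Suppose Δ : A → M is a ℂ-linear map satisfying Δ(a∘x) = a•Δ(x) + Δ(a)•x for all a ∈ A and x ∈ J. Then for all a ∈ A and x, y ∈ J: Δ(xay + yax) = (Δ(x)ay + yaΔ(x)) + (xΔ(a)y + yΔ(a)x) + (xaΔ(y) + Δ(y)ax). -/
open MulOpposite in
/-- Claim 1 in the proof of Theorem 4.3: if a linear map `Δ : A → M` satisfies
`Δ(a∘x) = a•Δ(x) + Δ(a)•x` for all `a ∈ A` and `x` in a two-sided ideal `J`, then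
`Δ(xay + yax) = (Δ(x)ay + yaΔ(x)) + (xΔ(a)y + yΔ(a)x) + (xaΔ(y) + Δ(y)ax)` for all
`a ∈ A` and `x, y ∈ J`.  Here the left action of `A` on `M` is `a • m` and the right
action is `op b • m`. -/
theorem jordan_derivable_on_ideal_triple_identity
    {A M : Type*} [Ring A] [Algebra ℂ A]
    [AddCommGroup M] [Module ℂ M]
    [Module A M] [Module Aᵐᵒᵖ M] [SMulCommClass A Aᵐᵒᵖ M]
    [IsScalarTower ℂ A M] [IsScalarTower ℂ Aᵐᵒᵖ M]
    (J : TwoSidedIdeal A)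
    (Δ : A →ₗ[ℂ] M)
    (hΔ : ∀ a : A, ∀ x ∈ J,
      Δ (a * x + x * a) = (a • Δ x + op a • Δ x) + (x • Δ a + op x • Δ a)) :
    ∀ a : A, ∀ x ∈ J, ∀ y ∈ J,
      Δ (x * a * y + y * a * x)
        = ((y * a) • Δ x + op (a * y) • Δ x)
          + (op y • (x • Δ a) + op x • (y • Δ a))
          + ((x * a) • Δ y + op (a * x) • Δ y) := by
  intro a x hx y hy
  have hxy : x * y + y * x ∈ J := J.add_mem (J.mul_mem_right _ _ hx) (J.mul_mem_right _ _ hy)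
  have h1 := hΔ (a * x + x * a) y hy
  have h2 := hΔ (a * y + y * a) x hx
  have h3 := hΔ a (x * y + y * x) hxy
  have hax := hΔ a x hx
  have hay := hΔ a y hy
  have hxyJ := hΔ x y hy
  have hcancel : ∀ m n : M, m + m = n + n → m = n := by
    intro m n h
    have h2 : (2:ℂ) • m = (2:ℂ) • n := by rw [two_smul, two_smul]; exact h
    have := congrArg (fun z => (2⁻¹:ℂ) • z) h2
    simpa [smul_smul] using this
  apply hcancel
  have E : (x * a * y + y * a * x) + (x * a * y + y * a * x)
      = (((a * x + x * a) * y + y * (a * x + x * a))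
        + ((a * y + y * a) * x + x * (a * y + y * a)))
        - (a * (x * y + y * x) + (x * y + y * x) * a) := by noncomm_ring
  have hΔE : Δ ((x * a * y + y * a * x) + (x * a * y + y * a * x))
      = Δ ((a * x + x * a) * y + y * (a * x + x * a))
        + Δ ((a * y + y * a) * x + x * (a * y + y * a))
        - Δ (a * (x * y + y * x) + (x * y + y * x) * a) := by
    rw [E, map_sub, map_add]
  rw [map_add] at hΔE
  rw [hΔE, h1, h2, h3, hax, hay, hxyJ]
  have hc : ∀ (p : A) (q : Aᵐᵒᵖ) (m : M), q • p • m = p • q • m :=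
    fun p q m => (smul_comm p q m).symm
  simp only [smul_add, op_add, add_smul, op_mul, mul_smul, hc]
  abel
end

section
/- Let A be a unital associative algebra over ℂ, let M be a unital A-bimodule, and let J be a two-sided ideal of A. Suppose Δ : A → M is a ℂ-linear map satisfying Δ(a∘x) = a•Δ(x) + Δ(a)•x for all a ∈ A and x ∈ J. Then for all a ∈ A and x, y ∈ J: Δ(xa²y + ya²x) = (Δ(x)a²y + ya²Δ(x)) + (x(aΔ(a) + Δ(a)a)y + y(aΔ(a) + Δ(a)a)x) + (xa²Δ(y) + Δ(y)a²x). -/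
set_option maxHeartbeats 4000000 in
open MulOpposite in
/-- Claim 2 in the proof of Theorem 4.3: if a linear map `Δ : A → M` satisfies
`Δ(a∘x) = a•Δ(x) + Δ(a)•x` for all `a ∈ A` and `x` in a two-sided ideal `J`, then
`Δ(xa²y + ya²x) = (Δ(x)a²y + ya²Δ(x)) + (x(aΔ(a)+Δ(a)a)y + y(aΔ(a)+Δ(a)a)x)
+ (xa²Δ(y) + Δ(y)a²x)` for all `a ∈ A` and `x, y ∈ J`.  Here the left action of `A` on
`M` is `a • m` and the right action is `op b • m`. -/
theorem jordan_derivable_on_ideal_square_triple_identity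
    {A M : Type*} [Ring A] [Algebra ℂ A]
    [AddCommGroup M] [Module ℂ M]
    [Module A M] [Module Aᵐᵒᵖ M] [SMulCommClass A Aᵐᵒᵖ M]
    [IsScalarTower ℂ A M] [IsScalarTower ℂ Aᵐᵒᵖ M]
    (J : TwoSidedIdeal A)
    (Δ : A →ₗ[ℂ] M)
    (hΔ : ∀ a : A, ∀ x ∈ J,
      Δ (a * x + x * a) = (a • Δ x + op a • Δ x) + (x • Δ a + op x • Δ a)) :
    ∀ a : A, ∀ x ∈ J, ∀ y ∈ J,
      Δ (x * (a * a) * y + y * (a * a) * x)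
        = ((y * (a * a)) • Δ x + op ((a * a) * y) • Δ x)
          + (op y • (x • (a • Δ a + op a • Δ a)) + op x • (y • (a • Δ a + op a • Δ a)))
          + ((x * (a * a)) • Δ y + op ((a * a) * x) • Δ y) := by
  intro a x hx y hy
  have sw : ∀ (c : A) (d : Aᵐᵒᵖ) (m : M), c • d • m = d • c • m := fun c d m => smul_comm c d m
  have E0 : Δ ((x) * (y)) + Δ ((y) * (x)) = ((x) • Δ (y) + op (x) • Δ (y)) + ((y) • Δ (x) + op (y) • Δ (x)) := by
    have h := hΔ (x) (y) hy
    rwa [map_add] at h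
  have E1 : Δ ((a) * (y)) + Δ ((y) * (a)) = ((a) • Δ (y) + op (a) • Δ (y)) + ((y) • Δ (a) + op (y) • Δ (a)) := by
    have h := hΔ (a) (y) hy
    rwa [map_add] at h
  have E2 : Δ ((x * a) * (y)) + Δ ((y) * (x * a)) = ((x * a) • Δ (y) + op (x * a) • Δ (y)) + ((y) • Δ (x * a) + op (y) • Δ (x * a)) := by
    have h := hΔ (x * a) (y) hy
    rwa [map_add] at h
  have E3 : Δ ((a * x) * (y)) + Δ ((y) * (a * x)) = ((a * x) • Δ (y) + op (a * x) • Δ (y)) + ((y) • Δ (a * x) + op (y) • Δ (a * x)) := by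
    have h := hΔ (a * x) (y) hy
    rwa [map_add] at h
  have E4 : Δ ((a) * (x)) + Δ ((x) * (a)) = ((a) • Δ (x) + op (a) • Δ (x)) + ((x) • Δ (a) + op (x) • Δ (a)) := by
    have h := hΔ (a) (x) hx
    rwa [map_add] at h
  have E5 : Δ ((a * y) * (x)) + Δ ((x) * (a * y)) = ((a * y) • Δ (x) + op (a * y) • Δ (x)) + ((x) • Δ (a * y) + op (x) • Δ (a * y)) := by
    have h := hΔ (a * y) (x) hx
    rwa [map_add] at h
  have E6 : Δ ((y * a) * (x)) + Δ ((x) * (y * a)) = ((y * a) • Δ (x) + op (y * a) • Δ (x)) + ((x) • Δ (y * a) + op (x) • Δ (y * a)) := by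
    have h := hΔ (y * a) (x) hx
    rwa [map_add] at h
  have E7 : Δ ((a) * (y * x)) + Δ ((y * x) * (a)) = ((a) • Δ (y * x) + op (a) • Δ (y * x)) + ((y * x) • Δ (a) + op (y * x) • Δ (a)) := by
    have h := hΔ (a) (y * x) (J.mul_mem_right y (x) hy)
    rwa [map_add] at h
  have E8 : Δ ((a) * (x * y)) + Δ ((x * y) * (a)) = ((a) • Δ (x * y) + op (a) • Δ (x * y)) + ((x * y) • Δ (a) + op (x * y) • Δ (a)) := by
    have h := hΔ (a) (x * y) (J.mul_mem_right x (y) hx)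
    rwa [map_add] at h
  have E9 : Δ ((a * (a * x)) * (y)) + Δ ((y) * (a * (a * x))) = ((a * (a * x)) • Δ (y) + op (a * (a * x)) • Δ (y)) + ((y) • Δ (a * (a * x)) + op (y) • Δ (a * (a * x))) := by
    have h := hΔ (a * (a * x)) (y) hy
    rwa [map_add] at h
  have E10 : Δ ((a * (x * a)) * (y)) + Δ ((y) * (a * (x * a))) = ((a * (x * a)) • Δ (y) + op (a * (x * a)) • Δ (y)) + ((y) • Δ (a * (x * a)) + op (y) • Δ (a * (x * a))) := by
    have h := hΔ (a * (x * a)) (y) hy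
    rwa [map_add] at h
  have E11 : Δ ((x * (a * a)) * (y)) + Δ ((y) * (x * (a * a))) = ((x * (a * a)) • Δ (y) + op (x * (a * a)) • Δ (y)) + ((y) • Δ (x * (a * a)) + op (y) • Δ (x * (a * a))) := by
    have h := hΔ (x * (a * a)) (y) hy
    rwa [map_add] at h
  have E12 : Δ ((a * (y * a)) * (x)) + Δ ((x) * (a * (y * a))) = ((a * (y * a)) • Δ (x) + op (a * (y * a)) • Δ (x)) + ((x) • Δ (a * (y * a)) + op (x) • Δ (a * (y * a))) := by
    have h := hΔ (a * (y * a)) (x) hx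
    rwa [map_add] at h
  have E13 : Δ ((y * (a * a)) * (x)) + Δ ((x) * (y * (a * a))) = ((y * (a * a)) • Δ (x) + op (y * (a * a)) • Δ (x)) + ((x) • Δ (y * (a * a)) + op (x) • Δ (y * (a * a))) := by
    have h := hΔ (y * (a * a)) (x) hx
    rwa [map_add] at h
  have E14 : Δ ((a * (a * y)) * (x)) + Δ ((x) * (a * (a * y))) = ((a * (a * y)) • Δ (x) + op (a * (a * y)) • Δ (x)) + ((x) • Δ (a * (a * y)) + op (x) • Δ (a * (a * y))) := by
    have h := hΔ (a * (a * y)) (x) hx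
    rwa [map_add] at h
  have E15 : Δ ((a) * (a * y)) + Δ ((a * y) * (a)) = ((a) • Δ (a * y) + op (a) • Δ (a * y)) + ((a * y) • Δ (a) + op (a * y) • Δ (a)) := by
    have h := hΔ (a) (a * y) (J.mul_mem_left a (y) hy)
    rwa [map_add] at h
  have E16 : Δ ((a) * (y * a)) + Δ ((y * a) * (a)) = ((a) • Δ (y * a) + op (a) • Δ (y * a)) + ((y * a) • Δ (a) + op (y * a) • Δ (a)) := by
    have h := hΔ (a) (y * a) (J.mul_mem_right y (a) hy)
    rwa [map_add] at h
  have E17 : Δ ((x * a) * (a * y)) + Δ ((a * y) * (x * a)) = ((x * a) • Δ (a * y) + op (x * a) • Δ (a * y)) + ((a * y) • Δ (x * a) + op (a * y) • Δ (x * a)) := by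
    have h := hΔ (x * a) (a * y) (J.mul_mem_left a (y) hy)
    rwa [map_add] at h
  have E18 : Δ ((x * a) * (y * a)) + Δ ((y * a) * (x * a)) = ((x * a) • Δ (y * a) + op (x * a) • Δ (y * a)) + ((y * a) • Δ (x * a) + op (y * a) • Δ (x * a)) := by
    have h := hΔ (x * a) (y * a) (J.mul_mem_right y (a) hy)
    rwa [map_add] at h
  have E19 : Δ ((a * x) * (a * y)) + Δ ((a * y) * (a * x)) = ((a * x) • Δ (a * y) + op (a * x) • Δ (a * y)) + ((a * y) • Δ (a * x) + op (a * y) • Δ (a * x)) := by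
    have h := hΔ (a * x) (a * y) (J.mul_mem_left a (y) hy)
    rwa [map_add] at h
  have E20 : Δ ((a * x) * (y * a)) + Δ ((y * a) * (a * x)) = ((a * x) • Δ (y * a) + op (a * x) • Δ (y * a)) + ((y * a) • Δ (a * x) + op (y * a) • Δ (a * x)) := by
    have h := hΔ (a * x) (y * a) (J.mul_mem_right y (a) hy)
    rwa [map_add] at h
  have E21 : Δ ((a) * (x * a)) + Δ ((x * a) * (a)) = ((a) • Δ (x * a) + op (a) • Δ (x * a)) + ((x * a) • Δ (a) + op (x * a) • Δ (a)) := by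
    have h := hΔ (a) (x * a) (J.mul_mem_right x (a) hx)
    rwa [map_add] at h
  have E22 : Δ ((a) * (a * x)) + Δ ((a * x) * (a)) = ((a) • Δ (a * x) + op (a) • Δ (a * x)) + ((a * x) • Δ (a) + op (a * x) • Δ (a)) := by
    have h := hΔ (a) (a * x) (J.mul_mem_left a (x) hx)
    rwa [map_add] at h
  have E23 : Δ ((a) * (x * (y * a))) + Δ ((x * (y * a)) * (a)) = ((a) • Δ (x * (y * a)) + op (a) • Δ (x * (y * a))) + ((x * (y * a)) • Δ (a) + op (x * (y * a)) • Δ (a)) := by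
    have h := hΔ (a) (x * (y * a)) (J.mul_mem_right x (y * a) hx)
    rwa [map_add] at h
  have E24 : Δ ((a) * (y * (a * x))) + Δ ((y * (a * x)) * (a)) = ((a) • Δ (y * (a * x)) + op (a) • Δ (y * (a * x))) + ((y * (a * x)) • Δ (a) + op (y * (a * x)) • Δ (a)) := by
    have h := hΔ (a) (y * (a * x)) (J.mul_mem_right y (a * x) hy)
    rwa [map_add] at h
  have E25 : Δ ((a) * (a * (x * y))) + Δ ((a * (x * y)) * (a)) = ((a) • Δ (a * (x * y)) + op (a) • Δ (a * (x * y))) + ((a * (x * y)) • Δ (a) + op (a * (x * y)) • Δ (a)) := by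
    have h := hΔ (a) (a * (x * y)) (J.mul_mem_left a (x * y) (J.mul_mem_right x (y) hx))
    rwa [map_add] at h
  have E26 : Δ ((a) * (y * (x * a))) + Δ ((y * (x * a)) * (a)) = ((a) • Δ (y * (x * a)) + op (a) • Δ (y * (x * a))) + ((y * (x * a)) • Δ (a) + op (y * (x * a)) • Δ (a)) := by
    have h := hΔ (a) (y * (x * a)) (J.mul_mem_right y (x * a) hy)
    rwa [map_add] at h
  have E27 : Δ ((a) * (x * (a * y))) + Δ ((x * (a * y)) * (a)) = ((a) • Δ (x * (a * y)) + op (a) • Δ (x * (a * y))) + ((x * (a * y)) • Δ (a) + op (x * (a * y)) • Δ (a)) := by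
    have h := hΔ (a) (x * (a * y)) (J.mul_mem_right x (a * y) hx)
    rwa [map_add] at h
  have E28 : Δ ((a) * (a * (y * x))) + Δ ((a * (y * x)) * (a)) = ((a) • Δ (a * (y * x)) + op (a) • Δ (a * (y * x))) + ((a * (y * x)) • Δ (a) + op (a * (y * x)) • Δ (a)) := by
    have h := hΔ (a) (a * (y * x)) (J.mul_mem_left a (y * x) (J.mul_mem_right y (x) hy))
    rwa [map_add] at h
  have expand : (4 : ℤ) • ((Δ (x * (a * (a * y))) + Δ (y * (a * (a * x)))) - (((y * (a * a)) • Δ x + op (a * (a * y)) • Δ x) + (op y • (x • (a • Δ a + op a • Δ a)) + op x • (y • (a • Δ a + op a • Δ a))) + ((x * (a * a)) • Δ y + op (a * (a * x)) • Δ y))) =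
      (1 : ℤ) • ((a * a) • (Δ ((x) * (y)) + Δ ((y) * (x)) - (((x) • Δ (y) + op (x) • Δ (y)) + ((y) • Δ (x) + op (y) • Δ (x))))) +
      (3 : ℤ) • ((x * a) • (Δ ((a) * (y)) + Δ ((y) * (a)) - (((a) • Δ (y) + op (a) • Δ (y)) + ((y) • Δ (a) + op (y) • Δ (a))))) +
      (-2 : ℤ) • ((a) • (Δ ((x * a) * (y)) + Δ ((y) * (x * a)) - (((x * a) • Δ (y) + op (x * a) • Δ (y)) + ((y) • Δ (x * a) + op (y) • Δ (x * a))))) +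
      (-2 : ℤ) • ((a) • (Δ ((a * x) * (y)) + Δ ((y) * (a * x)) - (((a * x) • Δ (y) + op (a * x) • Δ (y)) + ((y) • Δ (a * x) + op (y) • Δ (a * x))))) +
      (3 : ℤ) • ((y * a) • (Δ ((a) * (x)) + Δ ((x) * (a)) - (((a) • Δ (x) + op (a) • Δ (x)) + ((x) • Δ (a) + op (x) • Δ (a))))) +
      (-2 : ℤ) • ((a) • (Δ ((a * y) * (x)) + Δ ((x) * (a * y)) - (((a * y) • Δ (x) + op (a * y) • Δ (x)) + ((x) • Δ (a * y) + op (x) • Δ (a * y))))) +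
      (-2 : ℤ) • ((a) • (Δ ((y * a) * (x)) + Δ ((x) * (y * a)) - (((y * a) • Δ (x) + op (y * a) • Δ (x)) + ((x) • Δ (y * a) + op (x) • Δ (y * a))))) +
      (1 : ℤ) • ((a) • (Δ ((a) * (y * x)) + Δ ((y * x) * (a)) - (((a) • Δ (y * x) + op (a) • Δ (y * x)) + ((y * x) • Δ (a) + op (y * x) • Δ (a))))) +
      (1 : ℤ) • ((a) • (Δ ((a) * (x * y)) + Δ ((x * y) * (a)) - (((a) • Δ (x * y) + op (a) • Δ (x * y)) + ((x * y) • Δ (a) + op (x * y) • Δ (a))))) +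
      (-1 : ℤ) • ((a) • (op (y) • (Δ ((a) * (x)) + Δ ((x) * (a)) - (((a) • Δ (x) + op (a) • Δ (x)) + ((x) • Δ (a) + op (x) • Δ (a)))))) +
      (-1 : ℤ) • ((a) • (op (x) • (Δ ((a) * (y)) + Δ ((y) * (a)) - (((a) • Δ (y) + op (a) • Δ (y)) + ((y) • Δ (a) + op (y) • Δ (a)))))) +
      (2 : ℤ) • ((a) • (op (a) • (Δ ((x) * (y)) + Δ ((y) * (x)) - (((x) • Δ (y) + op (x) • Δ (y)) + ((y) • Δ (x) + op (y) • Δ (x)))))) +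
      (1 : ℤ) • (Δ ((a * (a * x)) * (y)) + Δ ((y) * (a * (a * x))) - (((a * (a * x)) • Δ (y) + op (a * (a * x)) • Δ (y)) + ((y) • Δ (a * (a * x)) + op (y) • Δ (a * (a * x))))) +
      (2 : ℤ) • (Δ ((a * (x * a)) * (y)) + Δ ((y) * (a * (x * a))) - (((a * (x * a)) • Δ (y) + op (a * (x * a)) • Δ (y)) + ((y) • Δ (a * (x * a)) + op (y) • Δ (a * (x * a))))) +
      (1 : ℤ) • (Δ ((x * (a * a)) * (y)) + Δ ((y) * (x * (a * a))) - (((x * (a * a)) • Δ (y) + op (x * (a * a)) • Δ (y)) + ((y) • Δ (x * (a * a)) + op (y) • Δ (x * (a * a))))) +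
      (2 : ℤ) • (Δ ((a * (y * a)) * (x)) + Δ ((x) * (a * (y * a))) - (((a * (y * a)) • Δ (x) + op (a * (y * a)) • Δ (x)) + ((x) • Δ (a * (y * a)) + op (x) • Δ (a * (y * a))))) +
      (1 : ℤ) • (Δ ((y * (a * a)) * (x)) + Δ ((x) * (y * (a * a))) - (((y * (a * a)) • Δ (x) + op (y * (a * a)) • Δ (x)) + ((x) • Δ (y * (a * a)) + op (x) • Δ (y * (a * a))))) +
      (1 : ℤ) • (Δ ((a * (a * y)) * (x)) + Δ ((x) * (a * (a * y))) - (((a * (a * y)) • Δ (x) + op (a * (a * y)) • Δ (x)) + ((x) • Δ (a * (a * y)) + op (x) • Δ (a * (a * y))))) +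
      (1 : ℤ) • ((x) • (Δ ((a) * (a * y)) + Δ ((a * y) * (a)) - (((a) • Δ (a * y) + op (a) • Δ (a * y)) + ((a * y) • Δ (a) + op (a * y) • Δ (a))))) +
      (1 : ℤ) • ((x) • (Δ ((a) * (y * a)) + Δ ((y * a) * (a)) - (((a) • Δ (y * a) + op (a) • Δ (y * a)) + ((y * a) • Δ (a) + op (y * a) • Δ (a))))) +
      (2 : ℤ) • (Δ ((x * a) * (a * y)) + Δ ((a * y) * (x * a)) - (((x * a) • Δ (a * y) + op (x * a) • Δ (a * y)) + ((a * y) • Δ (x * a) + op (a * y) • Δ (x * a)))) +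
      (2 : ℤ) • (Δ ((x * a) * (y * a)) + Δ ((y * a) * (x * a)) - (((x * a) • Δ (y * a) + op (x * a) • Δ (y * a)) + ((y * a) • Δ (x * a) + op (y * a) • Δ (x * a)))) +
      (2 : ℤ) • (Δ ((a * x) * (a * y)) + Δ ((a * y) * (a * x)) - (((a * x) • Δ (a * y) + op (a * x) • Δ (a * y)) + ((a * y) • Δ (a * x) + op (a * y) • Δ (a * x)))) +
      (2 : ℤ) • (Δ ((a * x) * (y * a)) + Δ ((y * a) * (a * x)) - (((a * x) • Δ (y * a) + op (a * x) • Δ (y * a)) + ((y * a) • Δ (a * x) + op (y * a) • Δ (a * x)))) +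
      (1 : ℤ) • ((y) • (Δ ((a) * (x * a)) + Δ ((x * a) * (a)) - (((a) • Δ (x * a) + op (a) • Δ (x * a)) + ((x * a) • Δ (a) + op (x * a) • Δ (a))))) +
      (1 : ℤ) • ((y) • (Δ ((a) * (a * x)) + Δ ((a * x) * (a)) - (((a) • Δ (a * x) + op (a) • Δ (a * x)) + ((a * x) • Δ (a) + op (a * x) • Δ (a))))) +
      (-1 : ℤ) • (Δ ((a) * (x * (y * a))) + Δ ((x * (y * a)) * (a)) - (((a) • Δ (x * (y * a)) + op (a) • Δ (x * (y * a))) + ((x * (y * a)) • Δ (a) + op (x * (y * a)) • Δ (a)))) +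
      (-4 : ℤ) • (Δ ((a) * (y * (a * x))) + Δ ((y * (a * x)) * (a)) - (((a) • Δ (y * (a * x)) + op (a) • Δ (y * (a * x))) + ((y * (a * x)) • Δ (a) + op (y * (a * x)) • Δ (a)))) +
      (-1 : ℤ) • (Δ ((a) * (a * (x * y))) + Δ ((a * (x * y)) * (a)) - (((a) • Δ (a * (x * y)) + op (a) • Δ (a * (x * y))) + ((a * (x * y)) • Δ (a) + op (a * (x * y)) • Δ (a)))) +
      (-1 : ℤ) • (Δ ((a) * (y * (x * a))) + Δ ((y * (x * a)) * (a)) - (((a) • Δ (y * (x * a)) + op (a) • Δ (y * (x * a))) + ((y * (x * a)) • Δ (a) + op (y * (x * a)) • Δ (a)))) +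
      (-4 : ℤ) • (Δ ((a) * (x * (a * y))) + Δ ((x * (a * y)) * (a)) - (((a) • Δ (x * (a * y)) + op (a) • Δ (x * (a * y))) + ((x * (a * y)) • Δ (a) + op (x * (a * y)) • Δ (a)))) +
      (-1 : ℤ) • (Δ ((a) * (a * (y * x))) + Δ ((a * (y * x)) * (a)) - (((a) • Δ (a * (y * x)) + op (a) • Δ (a * (y * x))) + ((a * (y * x)) • Δ (a) + op (a * (y * x)) • Δ (a)))) +
      (1 : ℤ) • (op (y) • (Δ ((a) * (x * a)) + Δ ((x * a) * (a)) - (((a) • Δ (x * a) + op (a) • Δ (x * a)) + ((x * a) • Δ (a) + op (x * a) • Δ (a))))) +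
      (1 : ℤ) • (op (y) • (Δ ((a) * (a * x)) + Δ ((a * x) * (a)) - (((a) • Δ (a * x) + op (a) • Δ (a * x)) + ((a * x) • Δ (a) + op (a * x) • Δ (a))))) +
      (1 : ℤ) • (op (x) • (Δ ((a) * (a * y)) + Δ ((a * y) * (a)) - (((a) • Δ (a * y) + op (a) • Δ (a * y)) + ((a * y) • Δ (a) + op (a * y) • Δ (a))))) +
      (1 : ℤ) • (op (x) • (Δ ((a) * (y * a)) + Δ ((y * a) * (a)) - (((a) • Δ (y * a) + op (a) • Δ (y * a)) + ((y * a) • Δ (a) + op (y * a) • Δ (a))))) +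
      (-1 : ℤ) • ((x) • (op (a) • (Δ ((a) * (y)) + Δ ((y) * (a)) - (((a) • Δ (y) + op (a) • Δ (y)) + ((y) • Δ (a) + op (y) • Δ (a)))))) +
      (-2 : ℤ) • (op (a) • (Δ ((x * a) * (y)) + Δ ((y) * (x * a)) - (((x * a) • Δ (y) + op (x * a) • Δ (y)) + ((y) • Δ (x * a) + op (y) • Δ (x * a))))) +
      (-2 : ℤ) • (op (a) • (Δ ((a * x) * (y)) + Δ ((y) * (a * x)) - (((a * x) • Δ (y) + op (a * x) • Δ (y)) + ((y) • Δ (a * x) + op (y) • Δ (a * x))))) +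
      (-1 : ℤ) • ((y) • (op (a) • (Δ ((a) * (x)) + Δ ((x) * (a)) - (((a) • Δ (x) + op (a) • Δ (x)) + ((x) • Δ (a) + op (x) • Δ (a)))))) +
      (-2 : ℤ) • (op (a) • (Δ ((a * y) * (x)) + Δ ((x) * (a * y)) - (((a * y) • Δ (x) + op (a * y) • Δ (x)) + ((x) • Δ (a * y) + op (x) • Δ (a * y))))) +
      (-2 : ℤ) • (op (a) • (Δ ((y * a) * (x)) + Δ ((x) * (y * a)) - (((y * a) • Δ (x) + op (y * a) • Δ (x)) + ((x) • Δ (y * a) + op (x) • Δ (y * a))))) +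
      (1 : ℤ) • (op (a) • (Δ ((a) * (y * x)) + Δ ((y * x) * (a)) - (((a) • Δ (y * x) + op (a) • Δ (y * x)) + ((y * x) • Δ (a) + op (y * x) • Δ (a))))) +
      (1 : ℤ) • (op (a) • (Δ ((a) * (x * y)) + Δ ((x * y) * (a)) - (((a) • Δ (x * y) + op (a) • Δ (x * y)) + ((x * y) • Δ (a) + op (x * y) • Δ (a))))) +
      (3 : ℤ) • (op (a * y) • (Δ ((a) * (x)) + Δ ((x) * (a)) - (((a) • Δ (x) + op (a) • Δ (x)) + ((x) • Δ (a) + op (x) • Δ (a))))) +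
      (3 : ℤ) • (op (a * x) • (Δ ((a) * (y)) + Δ ((y) * (a)) - (((a) • Δ (y) + op (a) • Δ (y)) + ((y) • Δ (a) + op (y) • Δ (a))))) +
      (1 : ℤ) • (op (a * a) • (Δ ((x) * (y)) + Δ ((y) * (x)) - (((x) • Δ (y) + op (x) • Δ (y)) + ((y) • Δ (x) + op (y) • Δ (x))))) := by
    simp only [mul_assoc, smul_add, smul_sub, mul_smul, op_mul, sw]
    abel
  have final : (4 : ℤ) • ((Δ (x * (a * (a * y))) + Δ (y * (a * (a * x)))) - (((y * (a * a)) • Δ x + op (a * (a * y)) • Δ x) + (op y • (x • (a • Δ a + op a • Δ a)) + op x • (y • (a • Δ a + op a • Δ a))) + ((x * (a * a)) • Δ y + op (a * (a * x)) • Δ y))) = 0 := by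
    rw [expand]
    simp only [E0, E1, E2, E3, E4, E5, E6, E7, E8, E9, E10, E11, E12, E13, E14, E15, E16, E17, E18, E19, E20, E21, E22, E23, E24, E25, E26, E27, E28]
    simp only [sub_self, smul_zero, add_zero, zero_add]
  have final2 : (Δ (x * (a * (a * y))) + Δ (y * (a * (a * x)))) - (((y * (a * a)) • Δ x + op (a * (a * y)) • Δ x) + (op y • (x • (a • Δ a + op a • Δ a)) + op x • (y • (a • Δ a + op a • Δ a))) + ((x * (a * a)) • Δ y + op (a * (a * x)) • Δ y)) = 0 := by
    have h4 : ((4 : ℂ)) • ((Δ (x * (a * (a * y))) + Δ (y * (a * (a * x)))) - (((y * (a * a)) • Δ x + op (a * (a * y)) • Δ x) + (op y • (x • (a • Δ a + op a • Δ a)) + op x • (y • (a • Δ a + op a • Δ a))) + ((x * (a * a)) • Δ y + op (a * (a * x)) • Δ y))) = 0 := by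
      rw [show ((4:ℂ)) = ((4:ℤ) : ℂ) by norm_num, Int.cast_smul_eq_zsmul]
      exact final
    have := congrArg (fun m => (4: ℂ)⁻¹ • m) h4
    simpa [smul_smul] using this
  have final3 : (Δ (x * (a * (a * y))) + Δ (y * (a * (a * x)))) = (((y * (a * a)) • Δ x + op (a * (a * y)) • Δ x) + (op y • (x • (a • Δ a + op a • Δ a)) + op x • (y • (a • Δ a + op a • Δ a))) + ((x * (a * a)) • Δ y + op (a * (a * x)) • Δ y)) := sub_eq_zero.mp final2
  rw [map_add]
  simp only [mul_assoc]
  exact final3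
end

section
/- Let A be a unital associative algebra over ℂ, let M be a unital A-bimodule, and suppose there is a two-sided ideal J of A with J ⊆ Im(A) such that the only element m ∈ M satisfying xmx = 0 for all x ∈ J is m = 0. If D : A → M is a ℂ-linear map such that aD(b) + D(a)b = 0 whenever a, b ∈ A satisfy ab = ba = 0, then D(a∘b) = D(a)•b + a•D(b) − aD(1)b − bD(1)a for all a, b ∈ A (D is a generalized Jordan derivation), and aD(1) = D(1)a for all a ∈ A. -/
open MulOpposite

set_option linter.unusedSectionVars false

section aux

variable {A M : Type*} [Ring A] [Algebra ℂ A]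
    [AddCommGroup M] [Module ℂ M]
    [Module A M] [Module Aᵐᵒᵖ M] [SMulCommClass A Aᵐᵒᵖ M]
    [IsScalarTower ℂ A M] [IsScalarTower ℂ Aᵐᵒᵖ M]

private lemma swapS (a b : A) (m : M) : a • (op b • m) = op b • (a • m) :=
  smul_comm a (op b) m

private lemma opop (a b : A) (m : M) : op a • (op b • m) = op (b * a) • m := by
  rw [smul_smul, ← op_mul]

private lemma cL (c : ℂ) (a : A) (m : M) : a • (c • m) = c • (a • m) := by
  rw [show c • m = (c • (1 : A)) • m by rw [smul_assoc, one_smul],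
    smul_smul, mul_smul_comm, mul_one, smul_assoc]

private lemma cR (c : ℂ) (a : A) (m : M) : op a • (c • m) = c • (op a • m) := by
  rw [show c • m = (c • (1 : Aᵐᵒᵖ)) • m by rw [smul_assoc, one_smul],
    smul_smul, mul_smul_comm, mul_one, smul_assoc]

private lemma half {m n : M} (h : m + m = n + n) : m = n := by
  have h2 : (2 : ℂ) • m = (2 : ℂ) • n := by rw [two_smul, two_smul, h]
  have h3 := congrArg (fun z : M => (2⁻¹ : ℂ) • z) h2
  simpa [smul_smul, inv_mul_cancel₀ (two_ne_zero (α := ℂ))] using h3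

private def aL (m : M) : A →ₗ[ℂ] M where
  toFun a := a • m
  map_add' a b := add_smul a b m
  map_smul' c a := by simp [smul_assoc]

private def aR (m : M) : A →ₗ[ℂ] M where
  toFun a := op a • m
  map_add' a b := by simp only [op_add, add_smul]
  map_smul' c a := by simp only [op_smul, smul_assoc]; rfl

private def mLa (b : A) : M →ₗ[ℂ] M where
  toFun m := b • m
  map_add' := smul_add b
  map_smul' c m := cL c b m

private def mRa (b : A) : M →ₗ[ℂ] M where
  toFun m := op b • m
  map_add' := smul_add (op b)
  map_smul' c m := cR c b m

variable (D : A →ₗ[ℂ] M)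

private def dd : A →ₗ[ℂ] M := D - aL (D 1)

private lemma dd_apply (a : A) : dd D a = D a - a • D 1 := rfl

private lemma dd_one : dd D 1 = 0 := by
  rw [dd_apply, one_smul, sub_self]

private def Phi (c : A) : A →ₗ[ℂ] M :=
  (dd D).comp (LinearMap.mulRight ℂ c + LinearMap.mulLeft ℂ c)
    - (mRa c).comp (dd D) - (mLa c).comp (dd D) - aL (dd D c) - aR (dd D c)

private lemma Phi_apply (c x : A) :
    Phi D c x = dd D (x * c + c * x) - op c • dd D x - c • dd D x
      - x • dd D c - op x • dd D c := rfl

private lemma PhiOne (c : A) : Phi D c 1 = 0 := by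
  simp only [Phi_apply, one_mul, mul_one, map_add, dd_one, smul_zero, one_smul, op_one,
    sub_zero]
  abel

private lemma Phi_symm (c x : A) : Phi D c x = Phi D x c := by
  simp only [Phi_apply]
  rw [add_comm (x * c) (c * x)]
  abel

private lemma Hdiag
    (hD' : ∀ a b : A, a * b = 0 → b * a = 0 → a • dd D b + op b • dd D a = 0)
    (p : A) (hp : p * p = p) (b : A) : Phi D (p * (b * p)) p = 0 := by
  have hp' : ∀ z : A, p * (p * z) = p * z := fun z => by rw [← mul_assoc, hp]
  have h1 : (p * (b * p)) * (1 - p) = 0 := by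
    simp [mul_sub, mul_assoc, hp]
  have h2 : (1 - p) * (p * (b * p)) = 0 := by
    simp [sub_mul, hp']
  have r1 := hD' (p * (b * p)) (1 - p) h1 h2
  have r2 := hD' (1 - p) (p * (b * p)) h2 h1
  have key : Phi D (p * (b * p)) p
      = ((p * (b * p)) • dd D (1 - p) + op (1 - p) • dd D (p * (b * p)))
        + ((1 - p) • dd D (p * (b * p)) + op (p * (b * p)) • dd D (1 - p)) := by
    simp only [Phi_apply, map_add, map_sub, dd_one, smul_add, smul_sub, add_smul, sub_smul,
      op_add, op_sub, op_one, op_zero, one_smul, zero_smul, smul_zero, zero_sub, sub_zero,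
      smul_neg, neg_smul, mul_assoc, hp, hp', smul_smul, opop, ← op_mul, swapS, mul_one, one_mul]
    abel
  rw [r1, r2, add_zero] at key
  exact key

private lemma Hcorner
    (hD' : ∀ a b : A, a * b = 0 → b * a = 0 → a • dd D b + op b • dd D a = 0)
    (p : A) (hp : p * p = p) (b : A) : Phi D (p * (b * (1 - p))) p = 0 := by
  have hp' : ∀ z : A, p * (p * z) = p * z := fun z => by rw [← mul_assoc, hp]
  have f1 : (p + p * (b * (1 - p))) * ((1 - p) - p * (b * (1 - p))) = 0 := by
    simp [mul_add, add_mul, mul_sub, sub_mul, mul_assoc, hp, hp']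
  have f2 : ((1 - p) - p * (b * (1 - p))) * (p + p * (b * (1 - p))) = 0 := by
    simp [mul_add, add_mul, mul_sub, sub_mul, mul_assoc, hp, hp']
  have f3 : (p - p * (b * (1 - p))) * ((1 - p) + p * (b * (1 - p))) = 0 := by
    simp [mul_add, add_mul, mul_sub, sub_mul, mul_assoc, hp, hp']
  have f4 : ((1 - p) + p * (b * (1 - p))) * (p - p * (b * (1 - p))) = 0 := by
    simp [mul_add, add_mul, mul_sub, sub_mul, mul_assoc, hp, hp']
  have r1 := hD' (p + p * (b * (1 - p))) ((1 - p) - p * (b * (1 - p))) f1 f2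
  have r2 := hD' (p - p * (b * (1 - p))) ((1 - p) + p * (b * (1 - p))) f3 f4
  refine half ?_
  have key : Phi D (p * (b * (1 - p))) p + Phi D (p * (b * (1 - p))) p
      = ((p + p * (b * (1 - p))) • dd D ((1 - p) - p * (b * (1 - p)))
          + op ((1 - p) - p * (b * (1 - p))) • dd D (p + p * (b * (1 - p))))
        - ((p - p * (b * (1 - p))) • dd D ((1 - p) + p * (b * (1 - p)))
          + op ((1 - p) + p * (b * (1 - p))) • dd D (p - p * (b * (1 - p)))) := by
    simp only [Phi_apply, map_add, map_sub, dd_one, smul_add, smul_sub, add_smul, sub_smul,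
      op_add, op_sub, op_one, op_zero, one_smul, zero_smul, smul_zero, zero_sub, sub_zero,
      smul_neg, neg_smul, mul_add, add_mul, mul_sub, sub_mul, mul_assoc, hp, hp',
      smul_smul, opop, ← op_mul, swapS, mul_one, one_mul, map_zero, mul_zero, zero_mul]
    abel
  rw [r1, r2] at key
  simpa using key

private lemma L4
    (hD' : ∀ a b : A, a * b = 0 → b * a = 0 → a • dd D b + op b • dd D a = 0)
    (p : A) (hp : p * p = p) (c : A) : Phi D c p = 0 := by
  have hq : (1 - p) * (1 - p) = 1 - p := by
    rw [mul_sub, mul_one, sub_mul, one_mul, hp, sub_self, sub_zero]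
  have hcomp : ∀ c' : A, Phi D c' (1 - p) = 0 → Phi D c' p = 0 := by
    intro c' h
    have h2 : Phi D c' 1 = Phi D c' p + Phi D c' (1 - p) := by
      rw [← map_add, show p + (1 - p) = (1 : A) by abel]
    rw [PhiOne, h, add_zero] at h2
    exact h2.symm
  have c1 : Phi D (p * (c * p)) p = 0 := Hdiag D hD' p hp c
  have c2 : Phi D (p * (c * (1 - p))) p = 0 := Hcorner D hD' p hp c
  have c3 : Phi D ((1 - p) * (c * p)) p = 0 := by
    apply hcomp
    have h := Hcorner D hD' (1 - p) hq c
    rwa [sub_sub_cancel] at h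
  have c4 : Phi D ((1 - p) * (c * (1 - p))) p = 0 := by
    apply hcomp
    exact Hdiag D hD' (1 - p) hq c
  have hsplit : c = p * (c * p) + (p * (c * (1 - p))
      + ((1 - p) * (c * p) + (1 - p) * (c * (1 - p)))) := by noncomm_ring
  have e : Phi D p c = 0 := by
    conv_lhs => rw [hsplit]
    rw [map_add, map_add, map_add,
      Phi_symm D p (p * (c * p)), Phi_symm D p (p * (c * (1 - p))),
      Phi_symm D p ((1 - p) * (c * p)), Phi_symm D p ((1 - p) * (c * (1 - p))),
      c1, c2, c3, c4]
    simp
  rw [Phi_symm]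
  exact e

private lemma HS
    (hD' : ∀ a b : A, a * b = 0 → b * a = 0 → a • dd D b + op b • dd D a = 0)
    (c : A) : ∀ u ∈ Submodule.span ℂ {p : A | p * p = p}, Phi D c u = 0 := by
  intro u hu
  have hle : Submodule.span ℂ {p : A | p * p = p} ≤ LinearMap.ker (Phi D c) := by
    rw [Submodule.span_le]
    intro p hp
    exact LinearMap.mem_ker.mpr (L4 D hD' p hp c)
  exact LinearMap.mem_ker.mp (hle hu)

end aux

open MulOpposite in
/-- Theorem 4.4: let `M` be a unital `A`-bimodule satisfying property `𝕄`, i.e. there is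
a two-sided ideal `J ⊆ Im(A)` with `xmx = 0` for all `x ∈ J` forcing `m = 0`.  If
`D : A → M` is a linear map with `aD(b) + D(a)b = 0` whenever `ab = ba = 0`, then `D` is
a generalized Jordan derivation and `D(1)` commutes with `A`.  Here the left action of
`A` on `M` is `a • m` and the right action is `op b • m`. -/
theorem generalized_jordan_derivation_of_two_sided_zero_products
    {A M : Type*} [Ring A] [Algebra ℂ A]
    [AddCommGroup M] [Module ℂ M]
    [Module A M] [Module Aᵐᵒᵖ M] [SMulCommClass A Aᵐᵒᵖ M]
    [IsScalarTower ℂ A M] [IsScalarTower ℂ Aᵐᵒᵖ M]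
    (J : TwoSidedIdeal A)
    (hJ : ∀ x ∈ J, x ∈ Submodule.span ℂ {p : A | p * p = p})
    (hM : ∀ m : M, (∀ x ∈ J, op x • (x • m) = 0) → m = 0)
    (D : A →ₗ[ℂ] M)
    (hD : ∀ a b : A, a * b = 0 → b * a = 0 → a • D b + op b • D a = 0) :
    (∀ a b : A, D (a * b + b * a)
        = (b • D a + op b • D a) + (a • D b + op a • D b)
          - op b • (a • D 1) - op a • (b • D 1)) ∧
    (∀ a : A, a • D 1 = op a • D 1) := by
  have hJS : ∀ x, x ∈ J → x ∈ Submodule.span ℂ {p : A | p * p = p} := hJ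
  -- Step 1: D 1 commutes with every idempotent
  have key1 : ∀ p : A, p * p = p → p • D 1 = op p • D 1 := by
    intro p hp
    have h1 := hD p (1 - p) (by rw [mul_sub, mul_one, hp, sub_self])
      (by rw [sub_mul, one_mul, hp, sub_self])
    have h2 := hD (1 - p) p (by rw [sub_mul, one_mul, hp, sub_self])
      (by rw [mul_sub, mul_one, hp, sub_self])
    have key : p • D 1 - op p • D 1
        = (p • D (1 - p) + op (1 - p) • D p) - ((1 - p) • D p + op p • D (1 - p)) := by
      simp only [map_sub, smul_sub, sub_smul, op_sub, op_one, one_smul]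
      abel
    rw [h1, h2, sub_zero] at key
    exact sub_eq_zero.mp key
  -- Step 2: D 1 commutes with the span of idempotents
  have key2 : ∀ x ∈ Submodule.span ℂ {p : A | p * p = p}, x • D 1 = op x • D 1 := by
    intro x hx
    have hle : Submodule.span ℂ {p : A | p * p = p}
        ≤ LinearMap.ker (aL (D 1) - aR (D 1)) := by
      rw [Submodule.span_le]
      intro p hp
      have h : p • D 1 - op p • D 1 = 0 := by
        rw [key1 p hp, sub_self]
      simpa [LinearMap.mem_ker, aL, aR] using h
    have h := LinearMap.mem_ker.mp (hle hx)
    rw [LinearMap.sub_apply] at h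
    exact sub_eq_zero.mp (by simpa [aL, aR] using h)
  -- Step 3: D 1 commutes with everything
  have key3 : ∀ a : A, a • D 1 = op a • D 1 := by
    intro a
    refine sub_eq_zero.mp (hM _ fun x hx => ?_)
    have hxa : x * a ∈ J := J.mul_mem_right x a hx
    simp only [smul_sub, smul_smul, swapS, key2 x (hJS x hx), key2 (x * a) (hJS _ hxa),
      opop, ← op_mul, mul_assoc, sub_self, smul_zero]
  -- the reduced map dd D also annihilates two-sided zero products
  have hD' : ∀ a b : A, a * b = 0 → b * a = 0 → a • dd D b + op b • dd D a = 0 := by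
    intro a b hab hba
    have h := hD a b hab hba
    calc a • dd D b + op b • dd D a
        = (a • D b + op b • D a) - ((a * b) • D 1 + op (a * b) • D 1) := by
          simp only [dd_apply, smul_sub, smul_smul, key3 a, opop, ← op_mul]
          abel
      _ = 0 := by rw [h, hab]; simp
  -- square formula on J
  have dsq : ∀ x, x ∈ J → dd D (x * x) = op x • dd D x + x • dd D x := by
    intro x hx
    have h := HS D hD' x x (hJS x hx)
    refine half ?_
    have key : dd D (x * x) + dd D (x * x)
        - ((op x • dd D x + x • dd D x) + (op x • dd D x + x • dd D x)) = Phi D x x := by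
      simp only [Phi_apply, map_add]
      abel
    rw [h] at key
    exact sub_eq_zero.mp key
  -- P1 : sandwich formula on J
  have P1 : ∀ x, x ∈ J → ∀ c : A, dd D (x * (c * x))
      = op (c * x) • dd D x + op x • (x • dd D c) + (x * c) • dd D x := by
    intro x hx c
    have hxS := hJS x hx
    have hxx : x * x ∈ J := J.mul_mem_right x x hx
    have h1 := HS D hD' (x * c + c * x) x hxS
    have h2 := HS D hD' c (x * x) (hJS _ hxx)
    have h3 := HS D hD' c x hxS
    have h4 := dsq x hx
    refine half ?_
    have key : dd D (x * (c * x)) + dd D (x * (c * x))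
        - ((op (c * x) • dd D x + op x • (x • dd D c) + (x * c) • dd D x)
          + (op (c * x) • dd D x + op x • (x • dd D c) + (x * c) • dd D x))
        = Phi D (x * c + c * x) x - Phi D c (x * x)
          + (x • Phi D c x + op x • Phi D c x)
          - (c • (dd D (x * x) - (op x • dd D x + x • dd D x))
            + op c • (dd D (x * x) - (op x • dd D x + x • dd D x))) := by
      simp only [Phi_apply, map_add, map_sub, smul_add, smul_sub, add_smul, sub_smul,
        op_add, op_sub, smul_smul, opop, ← op_mul, swapS, mul_add, add_mul, mul_sub, sub_mul,
        mul_assoc]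
      abel
    rw [h1, h2, h3, h4] at key
    refine sub_eq_zero.mp (key.trans ?_)
    simp
  -- P2 : polarized sandwich formula on J
  have P2 : ∀ x y, x ∈ J → y ∈ J → ∀ c : A,
      dd D (x * (c * y) + y * (c * x))
        = op (c * y) • dd D x + op y • (x • dd D c) + (x * c) • dd D y
          + op (c * x) • dd D y + op x • (y • dd D c) + (y * c) • dd D x := by
    intro x y hx hy c
    have h1 := P1 (x + y) (J.add_mem hx hy) c
    have h2 := P1 x hx c
    have h3 := P1 y hy c
    have key : dd D (x * (c * y) + y * (c * x))
        - (op (c * y) • dd D x + op y • (x • dd D c) + (x * c) • dd D y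
          + op (c * x) • dd D y + op x • (y • dd D c) + (y * c) • dd D x)
        = (dd D ((x + y) * (c * (x + y)))
            - (op (c * (x + y)) • dd D (x + y) + op (x + y) • ((x + y) • dd D c)
              + ((x + y) * c) • dd D (x + y)))
          - (dd D (x * (c * x))
            - (op (c * x) • dd D x + op x • (x • dd D c) + (x * c) • dd D x))
          - (dd D (y * (c * y))
            - (op (c * y) • dd D y + op y • (y • dd D c) + (y * c) • dd D y)) := by
      simp only [map_add, map_sub, smul_add, smul_sub, add_smul, sub_smul, op_add, op_sub,
        smul_smul, opop, ← op_mul, swapS, mul_add, add_mul, mul_assoc]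
      abel
    rw [h1, h2, h3] at key
    refine sub_eq_zero.mp (key.trans ?_)
    simp
  -- main : Phi D b a = 0 for all a b
  have main : ∀ a b : A, Phi D b a = 0 := by
    intro a b
    apply hM
    intro x hx
    have hxS := hJS x hx
    have hW : x * (a * x) ∈ J := J.mul_mem_left x (a * x) (J.mul_mem_left a x hx)
    have hY : x * b + b * x ∈ J :=
      J.add_mem (J.mul_mem_right x b hx) (J.mul_mem_left b x hx)
    have hP2 := P2 x (x * b + b * x) hx hY a
    have hP1ab := P1 x hx (a * b + b * a)
    have hP1a := P1 x hx a
    have hHSw := HS D hD' b (x * (a * x)) (hJS _ hW)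
    have hHSxb := HS D hD' b x hxS
    have key : op x • (x • Phi D b a)
        = (dd D (x * (a * (x * b + b * x)) + (x * b + b * x) * (a * x))
            - (op (a * (x * b + b * x)) • dd D x + op (x * b + b * x) • (x • dd D a)
              + (x * a) • dd D (x * b + b * x)
              + op (a * x) • dd D (x * b + b * x) + op x • ((x * b + b * x) • dd D a)
              + ((x * b + b * x) * a) • dd D x))
          - (dd D (x * ((a * b + b * a) * x))
            - (op ((a * b + b * a) * x) • dd D x + op x • (x • dd D (a * b + b * a))
              + (x * (a * b + b * a)) • dd D x))
          - Phi D b (x * (a * x))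
          - op b • (dd D (x * (a * x))
              - (op (a * x) • dd D x + op x • (x • dd D a) + (x * a) • dd D x))
          - b • (dd D (x * (a * x))
              - (op (a * x) • dd D x + op x • (x • dd D a) + (x * a) • dd D x))
          + ((x * a) • Phi D b x + op (a * x) • Phi D b x) := by
      simp only [Phi_apply, map_add, map_sub, smul_add, smul_sub, add_smul, sub_smul,
        op_add, op_sub, smul_smul, opop, ← op_mul, swapS, mul_add, add_mul, mul_sub, sub_mul,
        mul_assoc]
      abel
    rw [hP2, hP1ab, hP1a, hHSw, hHSxb] at key
    refine key.trans ?_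
    simp
  refine ⟨fun a b => ?_, key3⟩
  have h := main a b
  have key : D (a * b + b * a)
      - ((b • D a + op b • D a) + (a • D b + op a • D b)
        - op b • (a • D 1) - op a • (b • D 1)) = Phi D b a := by
    simp only [Phi_apply, dd_apply, map_add, map_sub, smul_add, smul_sub, add_smul,
      sub_smul, op_add, op_sub, smul_smul, opop, ← op_mul, swapS, mul_add, add_mul, mul_sub,
      sub_mul, mul_assoc]
    abel
  rw [h] at key
  exact sub_eq_zero.mp key
end
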